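/- arXiv:1603.02707 — 6 statements merged into one kernel-verified Lean document; each statement's English description precedes it below -/
import Mathlib

section
/- Fix an integer N ≥ 1, integers 𝔱_1 > 𝔱_2 > ⋯ > 𝔱_N, an integer x, and an integer n with 1 ≤ n ≤ N − 1. Let S be the set of all z ∈ ℂ with Im z ≠ 0 satisfying Σ_{a=1}^{N−n} 1/(z − x + a) = Σ_{r=1}^{N} 1/(z − 𝔱_r). Then S is invariant under complex conjugation and has at most two elements; consequently the equation has either 0 or 2 non-real roots, and in the latter case the two non-real roots are complex conjugates of each other. -/
/-
Cancel the poles common to both sides: the equation becomes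
`∑_{a ∈ A} 1/(z - a) = ∑_{b ∈ B} 1/(z - b)` with `A` inside an interval `[α, β]` that contains no
point of `B`. Clearing denominators gives a real polynomial `W` of degree at most `|A| + |B| - 1`.
At consecutive poles carrying residues of the same sign, `W` takes values of opposite signs; along
the real line the residues form three blocks (`B` below `α`, `A`, `B` above `β`), so `W` has at
least `|A| + |B| - 3` real roots, leaving room for at most two non-real ones.
-/

open Complex Finset Polynomial

lemma neg_one_pow_card_filter_lt_mul_prod_sub_pos {R : Type*} [CommRing R] [LinearOrder R]
    [IsStrictOrderedRing R] {s : Finset R} {p : R} (hp : p ∉ s) :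
    0 < (-1) ^ #{c ∈ s | p < c} * ∏ c ∈ s, (p - c) := by
  rw [← prod_filter_mul_prod_filter_not s (p < ·), ← mul_assoc, ← prod_const,
    ← prod_mul_distrib]
  refine mul_pos (prod_pos fun c hc => ?_) (prod_pos fun c hc => ?_)
  · linarith [(mem_filter.1 hc).2]
  · obtain ⟨hcs, hcp⟩ := mem_filter.1 hc
    exact sub_pos.2 (lt_of_le_of_ne (not_lt.1 hcp) (ne_of_mem_of_not_mem hcs hp))

lemma exists_mem_Ioo_eq_zero_of_mul_neg {f : ℝ → ℝ} {a b : ℝ} (hab : a ≤ b)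
    (hf : ContinuousOn f (Set.Icc a b)) (h : f a * f b < 0) : ∃ r ∈ Set.Ioo a b, f r = 0 := by
  rcases mul_neg_iff.1 h with ⟨ha, hb⟩ | ⟨ha, hb⟩
  exacts [intermediate_value_Ioo' hab hf ⟨hb, ha⟩, intermediate_value_Ioo hab hf ⟨ha, hb⟩]

lemma card_le_encard_zeros_add_one_of_alternating {f : ℝ → ℝ} {I : Set ℝ} (hI : I.OrdConnected)
    (hf : ContinuousOn f I) (e : ℕ) {s : Finset ℝ} (hsI : ↑s ⊆ I)
    (hs : ∀ p ∈ s, 0 < (-1) ^ (#{c ∈ s | p < c} + e) * f p) :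
    (#s : ℕ∞) ≤ {r ∈ I | f r = 0}.encard + 1 := by
  induction s using Finset.strongInduction generalizing I with
  | H s ih =>
  by_cases hcard : #s ≤ 1
  · exact le_add_left (by exact_mod_cast hcard)
  have hne : s.Nonempty := card_pos.1 (by omega)
  set p := s.min' hne
  have hp : p ∈ s := s.min'_mem hne
  have hne' : (s.erase p).Nonempty := by
    rw [← card_pos, card_erase_of_mem hp]; omega
  set q := (s.erase p).min' hne'
  have hq : q ∈ s.erase p := (s.erase p).min'_mem hne'
  have hpq : p < q := lt_of_le_of_ne (s.min'_le q (mem_of_mem_erase hq)) (ne_of_mem_erase hq).symm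
  have hfilter : {c ∈ s | p < c} = insert q {c ∈ s | q < c} := by
    ext c
    simp only [mem_filter, mem_insert]
    constructor
    · rintro ⟨hc, hpc⟩
      rcases (s.erase p).min'_le c (mem_erase.2 ⟨hpc.ne', hc⟩) |>.eq_or_lt with h | h
      exacts [Or.inl h.symm, Or.inr ⟨hc, h⟩]
    · rintro (rfl | ⟨hc, hqc⟩)
      exacts [⟨mem_of_mem_erase hq, hpq⟩, ⟨hc, hpq.trans hqc⟩]
  have hsign : f p * f q < 0 := by
    have h := mul_pos (hs p hp) (hs q (mem_of_mem_erase hq))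
    rw [hfilter, card_insert_of_notMem (by simp), mul_mul_mul_comm, ← pow_add,
      show #{c ∈ s | q < c} + 1 + e + (#{c ∈ s | q < c} + e) = 2 * (#{c ∈ s | q < c} + e) + 1
        by ring, pow_succ, pow_mul] at h
    simpa using h
  have hIcc : Set.Icc p q ⊆ I := hI.out (hsI hp) (hsI (mem_of_mem_erase hq))
  obtain ⟨r, hr, hfr⟩ := exists_mem_Ioo_eq_zero_of_mul_neg hpq.le (hf.mono hIcc) hsign
  have ih' := ih (s.erase p) (erase_ssubset hp) (I := I ∩ Set.Ici q)
    (hI.inter Set.ordConnected_Ici) (hf.mono Set.inter_subset_left)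
    (fun c hc => ⟨hsI (mem_of_mem_erase hc), Set.mem_Ici.2 ((s.erase p).min'_le c hc)⟩)
    fun c hc => by
      have hpc : p ≤ c := s.min'_le c (mem_of_mem_erase hc)
      rw [filter_erase, erase_eq_of_notMem (by simpa using fun _ => hpc)]
      exact hs c (mem_of_mem_erase hc)
  have hsub : insert r {r ∈ I ∩ Set.Ici q | f r = 0} ⊆ {r ∈ I | f r = 0} := by
    rintro u (rfl | ⟨⟨huI, -⟩, hu⟩)
    exacts [⟨hIcc (Set.Ioo_subset_Icc_self hr), hfr⟩, ⟨huI, hu⟩]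
  calc (#s : ℕ∞) = #(s.erase p) + 1 := by rw [card_erase_of_mem hp]; norm_cast; omega
    _ ≤ {r ∈ I ∩ Set.Ici q | f r = 0}.encard + 1 + 1 := by gcongr
    _ = (insert r {r ∈ I ∩ Set.Ici q | f r = 0}).encard + 1 := by
      rw [Set.encard_insert_of_notMem fun h => (not_le.2 hr.2) h.1.2]
    _ ≤ {r ∈ I | f r = 0}.encard + 1 := by gcongr

/-- The numerator of `∑ c ∈ D, w c / (X - c)` over the common denominator `∏ d ∈ D, (X - d)`. -/
noncomputable def partialFractionNumerator (D : Finset ℝ) (w : ℝ → ℝ) : ℝ[X] :=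
  ∑ c ∈ D, C (w c) * ∏ d ∈ D.erase c, (X - C d)

namespace partialFractionNumerator

variable {D : Finset ℝ} {w : ℝ → ℝ}

lemma natDegree_le : (partialFractionNumerator D w).natDegree ≤ #D - 1 :=
  natDegree_sum_le_of_forall_le _ _ fun c _ => (natDegree_C_mul_le _ _).trans <| by
    rw [natDegree_finsetProd_X_sub_C_eq_card, card_erase_of_mem ‹_›]

lemma eval_of_mem {c : ℝ} (hc : c ∈ D) :
    (partialFractionNumerator D w).eval c = w c * ∏ d ∈ D.erase c, (c - d) := by
  simp only [partialFractionNumerator, eval_finsetSum, eval_mul, eval_C, eval_prod, eval_sub,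
    eval_X]
  refine sum_eq_single_of_mem c hc fun b hb hbc => ?_
  rw [prod_eq_zero (mem_erase.2 ⟨hbc.symm, hc⟩) (sub_self c), mul_zero]

lemma aeval_of_forall_ne {z : ℂ} (hz : ∀ c ∈ D, z ≠ c) :
    aeval z (partialFractionNumerator D w) = (∏ d ∈ D, (z - d)) * ∑ c ∈ D, w c / (z - c) := by
  simp only [partialFractionNumerator, map_sum, map_mul, map_prod, map_sub, aeval_C, aeval_X,
    mul_sum]
  refine sum_congr rfl fun c hc => ?_
  rw [← mul_prod_erase D _ hc]
  field_simp [sub_ne_zero.2 (hz c hc)]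
  exact mul_comm _ _

lemma ne_zero (hw : ∀ c ∈ D, w c ≠ 0) (hD : D.Nonempty) : partialFractionNumerator D w ≠ 0 := by
  obtain ⟨c, hc⟩ := hD
  intro h0
  have h := eval_of_mem (w := w) hc
  rw [h0, eval_zero] at h
  exact mul_ne_zero (hw c hc)
    (prod_ne_zero_iff.2 fun d hd => sub_ne_zero.2 (ne_of_mem_erase hd).symm) h.symm

lemma card_filter_le_encard_zeros_add_one {I : Set ℝ} [DecidablePred (· ∈ I)]
    (hI : I.OrdConnected) (e : ℕ)
    (hw : ∀ c ∈ D, c ∈ I → 0 < (-1) ^ e * w c) :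
    (#{c ∈ D | c ∈ I} : ℕ∞) ≤ {r ∈ I | (partialFractionNumerator D w).eval r = 0}.encard + 1 := by
  set s := {c ∈ D | c ∈ I}
  rcases s.eq_empty_or_nonempty with hs | ⟨c₀, hc₀⟩
  · simp [hs]
  have hc₀' := mem_filter.1 hc₀
  set k := #{d ∈ D | d ∉ I ∧ c₀ < d}
  refine card_le_encard_zeros_add_one_of_alternating hI
    (partialFractionNumerator D w).continuousOn (k + e) (fun c hc => (mem_filter.1 hc).2)
    fun c hc => ?_
  obtain ⟨hcD, hcI⟩ := mem_filter.1 hc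
  -- `I` is order-connected, so a pole outside `I` lies on the same side of every point of `s`.
  have hsame : ∀ d ∉ I, c < d ↔ c₀ < d := by
    have key : ∀ a ∈ I, ∀ b ∈ I, ∀ d ∉ I, a < d → b < d := fun a ha b hb d hd had =>
      lt_of_not_ge fun hdb => hd (hI.out ha hb ⟨had.le, hdb⟩)
    exact fun d hd => ⟨key c hcI c₀ hc₀'.2 d hd, key c₀ hc₀'.2 c hcI d hd⟩
  have hcard : #{d ∈ D | c < d} = #{d ∈ s | c < d} + k := by
    rw [← card_filter_add_card_filter_not (· ∈ I), filter_filter, filter_filter, filter_filter]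
    congr 2
    · exact filter_congr fun d _ => and_comm
    · exact filter_congr fun d _ =>
        ⟨fun h => ⟨h.2, (hsame d h.2).1 h.1⟩, fun h => ⟨(hsame d h.1).2 h.2, h.1⟩⟩
  have hprod := neg_one_pow_card_filter_lt_mul_prod_sub_pos (notMem_erase c D)
  rw [filter_erase, erase_eq_of_notMem (by simp), hcard] at hprod
  rw [eval_of_mem hcD]
  calc (0 : ℝ) < ((-1) ^ e * w c) * ((-1) ^ (#{d ∈ s | c < d} + k) * ∏ d ∈ D.erase c, (c - d)) :=
        mul_pos (hw c hcD hcI) hprod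
    _ = _ := by ring

lemma card_le_encard_zeros_add_three {α β : ℝ} (hαβ : α ≤ β)
    (hin : ∀ c ∈ D, c ∈ Set.Icc α β → 0 < w c) (hout : ∀ c ∈ D, c ∉ Set.Icc α β → w c < 0) :
    (#D : ℕ∞) ≤ {r : ℝ | (partialFractionNumerator D w).eval r = 0}.encard + 3 := by
  set W := partialFractionNumerator D w
  have hlow := card_filter_le_encard_zeros_add_one (w := w) (D := D) Set.ordConnected_Iio 1
    fun c hcD hc => by simpa using hout c hcD fun h => (not_lt.2 h.1) hc
  have hmid := card_filter_le_encard_zeros_add_one (w := w) (D := D) Set.ordConnected_Icc 0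
    fun c hcD hc => by simpa using hin c hcD hc
  have hhigh := card_filter_le_encard_zeros_add_one (w := w) (D := D) Set.ordConnected_Ioi 1
    fun c hcD hc => by simpa using hout c hcD fun h => (not_lt.2 h.2) hc
  have hcard : #D = #{c ∈ D | c ∈ Set.Iio α} + #{c ∈ D | c ∈ Set.Icc α β} +
      #{c ∈ D | c ∈ Set.Ioi β} := by
    rw [← card_union_of_disjoint, ← card_union_of_disjoint, filter_union_right, filter_union_right,
      filter_true_of_mem]
    · intro c _
      rcases lt_or_ge c α with h | h
      · exact Or.inl (Or.inl h)
      rcases le_or_gt c β with h' | h'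
      exacts [Or.inl (Or.inr ⟨h, h'⟩), Or.inr h']
    all_goals refine Finset.disjoint_left.2 fun c h h' => ?_
    · simp only [mem_union, mem_filter, Set.mem_Iio, Set.mem_Icc, Set.mem_Ioi] at h h'
      rcases h with ⟨-, h⟩ | ⟨-, h⟩ <;> linarith [h'.2]
    · simp only [mem_filter, Set.mem_Iio, Set.mem_Icc] at h h'
      linarith [h.2, h'.2.1]
  have hzeros : {r ∈ Set.Iio α | W.eval r = 0}.encard + {r ∈ Set.Icc α β | W.eval r = 0}.encard +
      {r ∈ Set.Ioi β | W.eval r = 0}.encard ≤ {r : ℝ | W.eval r = 0}.encard := by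
    rw [← Set.encard_union_eq, ← Set.encard_union_eq]
    · exact Set.encard_mono fun r hr => by rcases hr with (hr | hr) | hr <;> exact hr.2
    · refine Set.disjoint_left.2 fun r hr hr' => ?_
      rcases hr with ⟨hr, -⟩ | ⟨hr, -⟩ <;> simp_all only [Set.mem_Iio, Set.mem_Icc, Set.mem_Ioi,
        Set.mem_ofPred_eq] <;> linarith
    · exact Set.disjoint_left.2 fun r hr hr' => (not_lt.2 hr'.1.1) hr.1
  calc (#D : ℕ∞) ≤ ({r ∈ Set.Iio α | W.eval r = 0}.encard + 1) +
        ({r ∈ Set.Icc α β | W.eval r = 0}.encard + 1) +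
        ({r ∈ Set.Ioi β | W.eval r = 0}.encard + 1) := by
        rw [hcard]; push_cast; gcongr
    _ ≤ {r : ℝ | W.eval r = 0}.encard + 3 := by
      grw [← hzeros]
      exact le_of_eq (by ring)

theorem encard_nonreal_zeros_le_two {α β : ℝ} (hαβ : α ≤ β)
    (hin : ∀ c ∈ D, c ∈ Set.Icc α β → 0 < w c) (hout : ∀ c ∈ D, c ∉ Set.Icc α β → w c < 0)
    (hD : D.Nonempty) : {z : ℂ | z.im ≠ 0 ∧ ∑ c ∈ D, w c / (z - c) = 0}.encard ≤ 2 := by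
  set W := partialFractionNumerator D w
  set R := {r : ℝ | W.eval r = 0}
  set S := {z : ℂ | z.im ≠ 0 ∧ ∑ c ∈ D, w c / (z - c) = 0}
  have hW : W ≠ 0 := ne_zero (fun c hc => by
    by_cases h : c ∈ Set.Icc α β
    exacts [(hin c hc h).ne', (hout c hc h).ne]) hD
  have hsub : ofReal '' R ∪ S ⊆ W.rootSet ℂ := by
    rintro z (⟨r, hr, rfl⟩ | ⟨hz, hzS⟩) <;> refine (mem_rootSet.2 ⟨hW, ?_⟩)
    · rw [← Complex.coe_algebraMap, aeval_algebraMap_apply_eq_algebraMap_eval, hr, map_zero]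
    · rw [aeval_of_forall_ne fun c _ h => hz (by simp [h]), hzS, mul_zero]
  have hdisj : Disjoint (ofReal '' R) S :=
    Set.disjoint_left.2 fun _ ⟨r, _, hr⟩ hS => hS.1 (hr ▸ ofReal_im r)
  have hcomplex : R.encard + S.encard ≤ (#D - 1 : ℕ) :=
    calc R.encard + S.encard = (ofReal '' R ∪ S).encard := by
          rw [Set.encard_union_eq hdisj, ofReal_injective.encard_image]
      _ ≤ (W.rootSet ℂ).encard := Set.encard_mono hsub
      _ = (W.rootSet ℂ).ncard := (rootSet_finite W ℂ).cast_ncard_eq.symm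
      _ ≤ (#D - 1 : ℕ) := by exact_mod_cast (ncard_rootSet_le W ℂ).trans natDegree_le
  have hreal := card_le_encard_zeros_add_three hαβ hin hout
  obtain ⟨r, hr⟩ := ENat.ne_top_iff_exists.1 (ne_top_of_le_ne_top (ENat.natCast_ne_top _)
    (le_self_add.trans hcomplex))
  obtain ⟨s, hs⟩ := ENat.ne_top_iff_exists.1 (ne_top_of_le_ne_top (ENat.natCast_ne_top _)
    (le_add_self.trans hcomplex))
  rw [← hr, ← hs] at hcomplex
  rw [← hr] at hreal
  rw [← hs]
  have hDpos := hD.card_pos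
  norm_cast at hcomplex hreal ⊢
  omega

end partialFractionNumerator

theorem encard_nonreal_sum_one_div_eq_sum_one_div_le_two {A B : Finset ℝ} {α β : ℝ} (hαβ : α ≤ β)
    (hA : ∀ a ∈ A, a ∈ Set.Icc α β) (hB : ∀ b ∈ B, b ∉ Set.Icc α β) (hAB : (A ∪ B).Nonempty) :
    {z : ℂ | z.im ≠ 0 ∧ ∑ a ∈ A, 1 / (z - a) = ∑ b ∈ B, 1 / (z - b)}.encard ≤ 2 := by
  have hdisj : Disjoint A B := disjoint_left.2 fun a ha hb => hB a hb (hA a ha)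
  set w : ℝ → ℝ := fun c => if c ∈ A then 1 else -1
  have hsum (z : ℂ) : ∑ c ∈ A ∪ B, (w c : ℂ) / (z - c) =
      ∑ a ∈ A, 1 / (z - a) - ∑ b ∈ B, 1 / (z - b) := by
    rw [sum_union hdisj, sub_eq_add_neg, ← sum_neg_distrib]
    congr 1 <;> refine sum_congr rfl fun c hc => ?_
    · simp [w, hc]
    · simp [w, disjoint_right.1 hdisj hc, neg_div]
  have hin (c) (hc : c ∈ A ∪ B) (hcI : c ∈ Set.Icc α β) : 0 < w c := by
    simp [w, (mem_union.1 hc).resolve_right fun hcB => hB c hcB hcI]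
  have hout (c) (_ : c ∈ A ∪ B) (hcI : c ∉ Set.Icc α β) : w c < 0 := by
    have hcA : c ∉ A := fun hcA => hcI (hA c hcA)
    simp [w, hcA]
  refine le_trans (Set.encard_mono fun z hz => ?_)
    (partialFractionNumerator.encard_nonreal_zeros_le_two hαβ hin hout hAB)
  exact ⟨hz.1, by rw [hsum, hz.2, sub_self]⟩

lemma image_natCast_sub_subset_Icc (x : ℤ) (M : ℕ) :
    ↑((Icc 1 M).image fun a : ℕ => (x - a : ℝ)) ⊆ Set.Icc ((x : ℝ) - M) (x - 1) := by
  intro c hc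
  obtain ⟨a, ha, rfl⟩ := mem_image.1 hc
  have := mem_Icc.1 ha
  constructor <;> simp only [sub_le_sub_iff_left, Nat.one_le_cast, Nat.cast_le] <;> omega

lemma intCast_mem_image_natCast_sub {x k : ℤ} {M : ℕ}
    (h : (k : ℝ) ∈ Set.Icc ((x : ℝ) - M) (x - 1)) :
    (k : ℝ) ∈ (Icc 1 M).image fun a : ℕ => (x - a : ℝ) := by
  have h1 : x - M ≤ k := by exact_mod_cast h.1
  have h2 : k ≤ x - 1 := by exact_mod_cast h.2
  refine mem_image.2 ⟨(x - k).toNat, mem_Icc.2 ⟨by omega, by omega⟩, ?_⟩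
  rw [← Int.cast_natCast, Int.toNat_of_nonneg (by omega)]
  push_cast
  ring

/-- Lemma 2.1: the critical point equation
`∑_{a=1}^{N-n} 1/(z - x + a) = ∑_{r=1}^{N} 1/(z - 𝔱_r)`
has either 0 or 2 non-real roots; the set of non-real roots is invariant under
complex conjugation and has at most two elements. -/
theorem stmt_0 (N : ℕ) (hN : 1 ≤ N) (t : Fin N → ℤ) (ht : StrictAnti t)
    (x : ℤ) (n : ℕ) (hn1 : 1 ≤ n) (hnN : n ≤ N - 1)
    (S : Set ℂ)
    (hS : S = {z : ℂ | z.im ≠ 0 ∧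
      ∑ a ∈ Finset.Icc 1 (N - n), (1 : ℂ) / (z - (x : ℂ) + (a : ℂ)) =
      ∑ r : Fin N, (1 : ℂ) / (z - (t r : ℂ))}) :
    (∀ z ∈ S, (starRingEnd ℂ) z ∈ S) ∧ S.encard ≤ 2 := by
  subst hS
  refine ⟨fun z ⟨hz, h⟩ => ⟨by simpa using hz, by simpa using congrArg (starRingEnd ℂ) h⟩, ?_⟩
  set M := N - n
  set P : Finset ℝ := (Icc 1 M).image fun a : ℕ => (x - a : ℝ)
  set Q : Finset ℝ := univ.image fun r => (t r : ℝ)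
  have hPinj : Function.Injective fun a : ℕ => (x - a : ℝ) :=
    (sub_right_injective (b := (x : ℝ))).comp Nat.cast_injective
  have hQinj : Function.Injective fun r => (t r : ℝ) := Int.cast_injective.comp ht.injective
  have hcard : #P < #Q := by
    rw [card_image_of_injective _ hPinj, card_image_of_injective _ hQinj, Nat.card_Icc, card_univ,
      Fintype.card_fin]
    omega
  have hαβ : (x - M : ℝ) ≤ x - 1 := sub_le_sub_left (by exact_mod_cast (by omega : 1 ≤ M)) _
  have hB : ∀ c ∈ Q \ P, c ∉ Set.Icc (x - M : ℝ) (x - 1) := by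
    intro c hc hcI
    obtain ⟨r, -, rfl⟩ := mem_image.1 (mem_sdiff.1 hc).1
    exact (mem_sdiff.1 hc).2 (intCast_mem_image_natCast_sub hcI)
  have hne : (P \ Q ∪ Q \ P).Nonempty :=
    (sdiff_nonempty.2 fun h => (card_le_card h).not_gt hcard).mono subset_union_right
  refine le_trans (Set.encard_mono fun z hz => ?_)
    (encard_nonreal_sum_one_div_eq_sum_one_div_le_two hαβ
      (fun c hc => image_natCast_sub_subset_Icc x M (mem_sdiff.1 hc).1) hB hne)
  refine ⟨hz.1, ?_⟩
  rw [sum_sdiff_eq_sum_sdiff_iff, sum_image hPinj.injOn, sum_image hQinj.injOn]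
  convert hz.2 using 2 with a _ r _
  · push_cast; ring
  · norm_cast
end

section
/- Let D_l = {d^l_1 < ⋯ < d^l_L}, D' = {d'_1 < ⋯ < d'_P}, and D_r = {d^r_1 < ⋯ < d^r_R} be nonempty finite sets of real numbers with d^l_L < d'_1 and d'_P < d^r_1, set M = L + P + R, assume L + R ≠ P, and define f(z) = Σ_{d ∈ D_l ∪ D_r} 1/(z − d) − Σ_{d' ∈ D'} 1/(z − d') for z ∈ ℂ outside D_l ∪ D' ∪ D_r. Suppose f has at least one non-real zero. Then f has exactly two non-real zeros, which form a complex-conjugate pair, and exactly M − 3 real zeros: exactly one in each of the open intervals (d^l_i, d^l_{i+1}) (1 ≤ i ≤ L−1), (d'_j, d'_{j+1}) (1 ≤ j ≤ P−1), and (d^r_i, d^r_{i+1}) (1 ≤ i ≤ R−1), and no other real zeros; in particular f has no zero in (d^l_L, d'_1), in (d'_P, d^r_1), in (−∞, d^l_1), or in (d^r_R, ∞). -/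
open Finset Complex Filter Polynomial Topology

lemma tendsto_inv_sub_gt (a : ℝ) : Tendsto (fun x => (x - a)⁻¹) (𝓝[>] a) atTop := by
  apply tendsto_inv_nhdsGT_zero.comp
  apply tendsto_nhdsWithin_of_tendsto_nhds_of_eventually_within
  · exact ((continuous_id.sub continuous_const).tendsto' a 0 (by simp)).mono_left
      nhdsWithin_le_nhds
  · filter_upwards [self_mem_nhdsWithin] with x hx
    simpa [sub_pos] using hx

lemma tendsto_inv_sub_lt (b : ℝ) : Tendsto (fun x => (x - b)⁻¹) (𝓝[<] b) atBot := by
  have h : Tendsto (fun x : ℝ => -((-x - -b)⁻¹)) (𝓝[<] b) atBot := by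
    apply Filter.tendsto_neg_atTop_atBot.comp
    apply (tendsto_inv_sub_gt (-b)).comp
    apply tendsto_nhdsWithin_of_tendsto_nhds_of_eventually_within
    · exact (continuous_neg.tendsto b).mono_left nhdsWithin_le_nhds
    · filter_upwards [self_mem_nhdsWithin] with x hx
      simpa using hx
  refine h.congr fun x => ?_
  rw [show -x - -b = -(x - b) by ring, inv_neg, neg_neg]

section gap
variable {ι : Type*} [Fintype ι] [DecidableEq ι]

lemma contAt_sum_div (c : ι → ℝ) (sR : ι → ℝ) (t : Finset ι) {x : ℝ}
    (hx : ∀ k ∈ t, x ≠ c k) :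
    ContinuousAt (fun y => ∑ k ∈ t, sR k / (y - c k)) x := by
  apply tendsto_finset_sum
  intro k hk
  exact continuousAt_const.div (continuousAt_id.sub continuousAt_const)
    (sub_ne_zero.2 (hx k hk))

lemma gap_zero (c : ι → ℝ) (hc : Function.Injective c) (sR : ι → ℝ)
    (k₀ k₁ : ι) (hab : c k₀ < c k₁) (hs₀ : sR k₀ = 1) (hs₁ : sR k₁ = 1)
    (hgap : ∀ k, c k ∉ Set.Ioo (c k₀) (c k₁)) :
    ∃ x ∈ Set.Ioo (c k₀) (c k₁), (∑ k, sR k / (x - c k)) = 0 := by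
  set a := c k₀ with ha
  set b := c k₁ with hb
  set g : ℝ → ℝ := fun x => ∑ k, sR k / (x - c k) with hg
  have hsplit : ∀ k₂ : ι, sR k₂ = 1 → ∀ x : ℝ,
      g x = (x - c k₂)⁻¹ + ∑ k ∈ univ.erase k₂, sR k / (x - c k) := by
    intro k₂ hk₂ x
    rw [hg]
    simp only
    rw [← Finset.add_sum_erase _ _ (mem_univ k₂), hk₂, one_div]
  have herase : ∀ k₂ : ι, ∀ x : ℝ, x = c k₂ ∨ (∀ k, x ≠ c k) →
      ContinuousAt (fun y => ∑ k ∈ univ.erase k₂, sR k / (y - c k)) x := by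
    intro k₂ x hx
    apply contAt_sum_div
    intro k hk
    rcases hx with hx | hx
    · intro h
      exact (Finset.mem_erase.1 hk).1 (hc (hx.symm.trans h)).symm
    · exact hx k
  -- tendsto atTop at a from the right
  have hta : Tendsto g (𝓝[>] a) atTop := by
    have h1 : Tendsto (fun x => (x - a)⁻¹) (𝓝[>] a) atTop := tendsto_inv_sub_gt a
    have h2 := (herase k₀ a (Or.inl rfl)).tendsto.mono_left (nhdsWithin_le_nhds (s := Set.Ioi a))
    have := (h1.atTop_add h2)
    refine this.congr fun x => (hsplit k₀ hs₀ x).symm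
  have htb : Tendsto g (𝓝[<] b) atBot := by
    have h1 : Tendsto (fun x => (x - b)⁻¹) (𝓝[<] b) atBot := tendsto_inv_sub_lt b
    have h2 := (herase k₁ b (Or.inl rfl)).tendsto.mono_left (nhdsWithin_le_nhds (s := Set.Iio b))
    have := (h1.atBot_add h2)
    refine this.congr fun x => (hsplit k₁ hs₁ x).symm
  -- pick x₂ near b with g x₂ < 0
  have hmem₂ : ∀ᶠ x in 𝓝[<] b, g x < 0 ∧ x ∈ Set.Ioo a b := by
    filter_upwards [htb.eventually (eventually_lt_atBot 0),
      Ioo_mem_nhdsLT hab] with x h1 h2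
    exact ⟨h1, h2⟩
  obtain ⟨x₂, hgx₂, hx₂⟩ := hmem₂.exists
  have hmem₁ : ∀ᶠ x in 𝓝[>] a, 0 < g x ∧ x ∈ Set.Ioo a x₂ := by
    filter_upwards [hta.eventually (eventually_gt_atTop 0),
      Ioo_mem_nhdsGT hx₂.1] with x h1 h2
    exact ⟨h1, h2⟩
  obtain ⟨x₁, hgx₁, hx₁⟩ := hmem₁.exists
  have hsub : Set.Icc x₁ x₂ ⊆ Set.Ioo a b :=
    Set.Icc_subset_Ioo hx₁.1 hx₂.2
  have hcont : ContinuousOn g (Set.Icc x₁ x₂) := by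
    intro x hx
    refine (contAt_sum_div c sR univ ?_).continuousWithinAt
    intro k _
    rintro rfl
    exact hgap k (hsub hx)
  have := intermediate_value_Ioo' (le_of_lt hx₁.2) hcont
  have h0 : (0:ℝ) ∈ Set.Ioo (g x₂) (g x₁) := ⟨hgx₂, hgx₁⟩
  obtain ⟨x, hx, hx0⟩ := this h0
  exact ⟨x, ⟨lt_trans hx₁.1 hx.1, lt_trans hx.2 hx₂.2⟩, hx0⟩

end gap

section poly
variable {ι : Type*} [Fintype ι] [DecidableEq ι]

noncomputable def Npoly (c s : ι → ℂ) : Polynomial ℂ :=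
  ∑ k, Polynomial.C (s k) * ∏ j ∈ univ.erase k, (Polynomial.X - Polynomial.C (c j))

lemma Npoly_eval (c s : ι → ℂ) (z : ℂ) :
    (Npoly c s).eval z = ∑ k, s k * ∏ j ∈ univ.erase k, (z - c j) := by
  simp [Npoly, Polynomial.eval_finset_sum, Polynomial.eval_prod]

lemma key_eval (c s : ι → ℂ) (z : ℂ) (hz : ∀ k, z ≠ c k) :
    (∑ k, s k / (z - c k)) * ∏ k, (z - c k) = (Npoly c s).eval z := by
  rw [Npoly_eval, Finset.sum_mul]
  apply Finset.sum_congr rfl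
  intro k _
  rw [← Finset.mul_prod_erase univ _ (mem_univ k), div_mul_eq_mul_div,
    mul_comm (z - c k), ← mul_assoc, mul_div_assoc,
    div_self (sub_ne_zero.2 (hz k)), mul_one]

lemma Npoly_prod_natDegree (c : ι → ℂ) (k : ι) :
    (∏ j ∈ univ.erase k, (Polynomial.X - Polynomial.C (c j))).natDegree
      = Fintype.card ι - 1 := by
  rw [Polynomial.natDegree_prod _ _ (fun j _ => Polynomial.X_sub_C_ne_zero (c j))]
  simp [Polynomial.natDegree_X_sub_C, Finset.card_erase_of_mem, Finset.card_univ]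

lemma Npoly_coeff_top (c s : ι → ℂ) :
    (Npoly c s).coeff (Fintype.card ι - 1) = ∑ k, s k := by
  rw [Npoly, Polynomial.finset_sum_coeff]
  apply Finset.sum_congr rfl
  intro k _
  rw [Polynomial.coeff_C_mul]
  have hm : (∏ j ∈ univ.erase k, (Polynomial.X - Polynomial.C (c j))).Monic :=
    Polynomial.monic_prod_of_monic _ _ fun j _ => Polynomial.monic_X_sub_C (c j)
  have := hm.coeff_natDegree
  rw [Npoly_prod_natDegree] at this
  rw [this, mul_one]

lemma Npoly_natDegree_le (c s : ι → ℂ) :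
    (Npoly c s).natDegree ≤ Fintype.card ι - 1 := by
  apply Polynomial.natDegree_sum_le_of_forall_le
  intro k _
  exact le_trans (Polynomial.natDegree_C_mul_le _ _) (le_of_eq (Npoly_prod_natDegree c k))

lemma Npoly_ne_zero (c s : ι → ℂ) (hs : (∑ k, s k) ≠ 0) : Npoly c s ≠ 0 := by
  intro h
  apply hs
  rw [← Npoly_coeff_top c s, h, Polynomial.coeff_zero]

lemma roots_all {p : Polynomial ℂ} (hp : p ≠ 0) (T : Finset ℂ)
    (hT : ∀ z ∈ T, p.eval z = 0) (hcard : p.natDegree ≤ T.card) :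
    ∀ z, p.eval z = 0 → z ∈ T := by
  have hsub : T ⊆ p.roots.toFinset := by
    intro z hz
    rw [Multiset.mem_toFinset, Polynomial.mem_roots hp]
    exact hT z hz
  have hle : p.roots.toFinset.card ≤ T.card :=
    le_trans (Multiset.toFinset_card_le _) (le_trans (p.card_roots' ) hcard)
  have heq : T = p.roots.toFinset := Finset.eq_of_subset_of_card_le hsub hle
  intro z hz
  rw [heq, Multiset.mem_toFinset, Polynomial.mem_roots hp]
  exact hz

end poly

set_option maxHeartbeats 1600000 in
/-- The precise root counting used in the proofs of Lemmas 2.1 and 2.3: if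
`f(z) = ∑_{d ∈ D_l ∪ D_r} 1/(z - d) - ∑_{d' ∈ D'} 1/(z - d')` (with `L + R ≠ P`) has a
non-real zero, then it has exactly two non-real zeros, forming a complex conjugate pair,
and exactly `M - 3` real zeros: exactly one in each gap between consecutive points of
`D_l`, of `D'`, and of `D_r`, and no other real zeros; in particular no zeros in
`(d^l_L, d'_1)`, `(d'_P, d^r_1)`, `(-∞, d^l_1)`, `(d^r_R, ∞)`. -/
theorem stmt_3 (L P R : ℕ) (hL : 1 ≤ L) (hP : 1 ≤ P) (hR : 1 ≤ R)
    (hM : L + R ≠ P)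
    (dl : Fin L → ℝ) (dp : Fin P → ℝ) (dr : Fin R → ℝ)
    (hdl : StrictMono dl) (hdp : StrictMono dp) (hdr : StrictMono dr)
    (hlp : dl ⟨L - 1, by omega⟩ < dp ⟨0, by omega⟩)
    (hpr : dp ⟨P - 1, by omega⟩ < dr ⟨0, by omega⟩)
    (f : ℂ → ℂ)
    (hf : ∀ z : ℂ, f z =
      (∑ i : Fin L, 1 / (z - (dl i : ℂ))) + (∑ i : Fin R, 1 / (z - (dr i : ℂ))) -
        ∑ j : Fin P, 1 / (z - (dp j : ℂ)))
    (hnonreal : ∃ z : ℂ, z.im ≠ 0 ∧ f z = 0) :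
    (∃ z₀ : ℂ, z₀.im ≠ 0 ∧
      {z : ℂ | z.im ≠ 0 ∧ f z = 0} = {z₀, (starRingEnd ℂ) z₀}) ∧
    (∀ i : ℕ, ∀ h : i + 1 < L,
      ∃! x : ℝ, x ∈ Set.Ioo (dl ⟨i, by omega⟩) (dl ⟨i + 1, h⟩) ∧ f (x : ℂ) = 0) ∧
    (∀ j : ℕ, ∀ h : j + 1 < P,
      ∃! x : ℝ, x ∈ Set.Ioo (dp ⟨j, by omega⟩) (dp ⟨j + 1, h⟩) ∧ f (x : ℂ) = 0) ∧
    (∀ i : ℕ, ∀ h : i + 1 < R,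
      ∃! x : ℝ, x ∈ Set.Ioo (dr ⟨i, by omega⟩) (dr ⟨i + 1, h⟩) ∧ f (x : ℂ) = 0) ∧
    (∀ x : ℝ,
      x ∉ Set.range dl ∪ Set.range dp ∪ Set.range dr → f (x : ℂ) = 0 →
      (∃ i : ℕ, ∃ h : i + 1 < L,
        x ∈ Set.Ioo (dl ⟨i, by omega⟩) (dl ⟨i + 1, h⟩)) ∨
      (∃ j : ℕ, ∃ h : j + 1 < P,
        x ∈ Set.Ioo (dp ⟨j, by omega⟩) (dp ⟨j + 1, h⟩)) ∨
      (∃ i : ℕ, ∃ h : i + 1 < R,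
        x ∈ Set.Ioo (dr ⟨i, by omega⟩) (dr ⟨i + 1, h⟩))) ∧
    (∀ x : ℝ, x ∈ Set.Ioo (dl ⟨L - 1, by omega⟩) (dp ⟨0, by omega⟩) → f (x : ℂ) ≠ 0) ∧
    (∀ x : ℝ, x ∈ Set.Ioo (dp ⟨P - 1, by omega⟩) (dr ⟨0, by omega⟩) → f (x : ℂ) ≠ 0) ∧
    (∀ x : ℝ, x < dl ⟨0, by omega⟩ → f (x : ℂ) ≠ 0) ∧
    (∀ x : ℝ, dr ⟨R - 1, by omega⟩ < x → f (x : ℂ) ≠ 0) := by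
  classical
  obtain ⟨z₀, hz₀im, hz₀⟩ := hnonreal
  set ι := (Fin L ⊕ (Fin P ⊕ Fin R)) with hι
  set c : ι → ℝ := Sum.elim dl (Sum.elim dp dr) with hc
  set sR : ι → ℝ := Sum.elim (fun _ => 1) (Sum.elim (fun _ => -1) (fun _ => 1)) with hsR
  -- monotonicity helpers
  have hdlmono : ∀ (a b : ℕ) (ha : a < L) (hb : b < L), a ≤ b → dl ⟨a, ha⟩ ≤ dl ⟨b, hb⟩ :=
    fun a b ha hb h => hdl.monotone h
  have hdpmono : ∀ (a b : ℕ) (ha : a < P) (hb : b < P), a ≤ b → dp ⟨a, ha⟩ ≤ dp ⟨b, hb⟩ :=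
    fun a b ha hb h => hdp.monotone h
  have hdrmono : ∀ (a b : ℕ) (ha : a < R) (hb : b < R), a ≤ b → dr ⟨a, ha⟩ ≤ dr ⟨b, hb⟩ :=
    fun a b ha hb h => hdr.monotone h
  have hlp' : ∀ (i : Fin L) (j : Fin P), dl i < dp j := by
    intro i j
    calc dl i ≤ dl ⟨L - 1, by omega⟩ := hdlmono i.val (L-1) i.isLt (by omega) (by omega)
    _ < dp ⟨0, by omega⟩ := hlp
    _ ≤ dp j := hdpmono 0 j.val (by omega) j.isLt (by omega)
  have hpr' : ∀ (i : Fin P) (j : Fin R), dp i < dr j := by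
    intro i j
    calc dp i ≤ dp ⟨P - 1, by omega⟩ := hdpmono i.val (P-1) i.isLt (by omega) (by omega)
    _ < dr ⟨0, by omega⟩ := hpr
    _ ≤ dr j := hdrmono 0 j.val (by omega) j.isLt (by omega)
  have hlr' : ∀ (i : Fin L) (j : Fin R), dl i < dr j :=
    fun i j => lt_trans (hlp' i ⟨0, by omega⟩) (hpr' ⟨0, by omega⟩ j)
  have hcinj : Function.Injective c := by
    rintro (i | j | k) (i' | j' | k') h <;> simp only [hc, Sum.elim_inl, Sum.elim_inr] at h
    · rw [hdl.injective h]
    · exact absurd h (ne_of_lt (hlp' i j'))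
    · exact absurd h (ne_of_lt (hlr' i k'))
    · exact absurd h (ne_of_gt (hlp' i' j))
    · rw [hdp.injective h]
    · exact absurd h (ne_of_lt (hpr' j k'))
    · exact absurd h (ne_of_gt (hlr' i' k))
    · exact absurd h (ne_of_gt (hpr' j' k))
    · rw [hdr.injective h]
  -- rewrite f as a single sum
  have hf' : ∀ z : ℂ, f z = ∑ k : ι, (sR k : ℂ) / (z - (c k : ℂ)) := by
    intro z
    rw [hf z, Fintype.sum_sum_type, Fintype.sum_sum_type]
    simp only [hc, hsR, Sum.elim_inl, Sum.elim_inr, Complex.ofReal_one,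
      Complex.ofReal_neg, one_div, neg_div]
    rw [Finset.sum_neg_distrib]
    ring
  -- real version
  set g : ℝ → ℝ := fun x => ∑ k : ι, sR k / (x - c k) with hgdef
  have hfg : ∀ x : ℝ, f (x : ℂ) = ((g x : ℝ) : ℂ) := by
    intro x
    rw [hf' (x : ℂ), hgdef]
    push_cast
    rfl
  have hfg0 : ∀ x : ℝ, (f (x : ℂ) = 0 ↔ g x = 0) := by
    intro x
    rw [hfg x]
    exact_mod_cast Iff.rfl
  -- the polynomial
  set s : ι → ℂ := fun k => ((sR k : ℝ) : ℂ) with hsdef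
  have hssum : (∑ k : ι, s k) ≠ 0 := by
    have : (∑ k : ι, s k) = (L : ℂ) + (-(P : ℂ) + (R : ℂ)) := by
      rw [Fintype.sum_sum_type, Fintype.sum_sum_type]
      simp [hsdef, hsR]
    rw [this]
    intro h
    have h2 : ((L + R : ℕ) : ℂ) = ((P : ℕ) : ℂ) := by push_cast; linear_combination h
    exact hM (Nat.cast_injective h2)
  set N : Polynomial ℂ := Npoly (fun k : ι => ((c k : ℝ) : ℂ)) s with hNdef
  have hN0 : N ≠ 0 := Npoly_ne_zero _ _ hssum
  have hcardι : Fintype.card ι = L + P + R := by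
    simp [hι, Fintype.card_sum]
    ring
  have hNdeg : N.natDegree ≤ L + P + R - 1 := by
    have := Npoly_natDegree_le (fun k : ι => ((c k : ℝ) : ℂ)) s
    rwa [hcardι] at this
  have hprodne : ∀ z : ℂ, (∀ k : ι, z ≠ (c k : ℂ)) → (∏ k : ι, (z - (c k : ℂ))) ≠ 0 := by
    intro z hz
    exact Finset.prod_ne_zero_iff.2 fun k _ => sub_ne_zero.2 (hz k)
  have keyf : ∀ z : ℂ, (∀ k : ι, z ≠ (c k : ℂ)) → (f z = 0 ↔ N.eval z = 0) := by
    intro z hz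
    have hk := key_eval (fun k : ι => ((c k : ℝ) : ℂ)) s z hz
    rw [hNdef]
    rw [← hk, hf' z, hsdef]
    constructor
    · intro h
      rw [h, zero_mul]
    · intro h
      rcases mul_eq_zero.1 h with h | h
      · exact h
      · exact absurd h (hprodne z hz)
  -- no poles in gaps
  have hnpl : ∀ (i : ℕ) (h : i + 1 < L), ∀ k : ι,
      c k ∉ Set.Ioo (dl ⟨i, by omega⟩) (dl ⟨i + 1, h⟩) := by
    intro i h k
    rintro ⟨h1, h2⟩
    rcases k with j | j | j <;> simp only [hc, Sum.elim_inl, Sum.elim_inr] at h1 h2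
    · have := hdl.lt_iff_lt.1 h1
      have := hdl.lt_iff_lt.1 h2
      simp [Fin.lt_def] at *
      omega
    · exact absurd h2 (not_lt.2 (le_of_lt (hlp' _ j)))
    · exact absurd h2 (not_lt.2 (le_of_lt (hlr' _ j)))
  have hnpp : ∀ (i : ℕ) (h : i + 1 < P), ∀ k : ι,
      c k ∉ Set.Ioo (dp ⟨i, by omega⟩) (dp ⟨i + 1, h⟩) := by
    intro i h k
    rintro ⟨h1, h2⟩
    rcases k with j | j | j <;> simp only [hc, Sum.elim_inl, Sum.elim_inr] at h1 h2
    · exact absurd h1 (not_lt.2 (le_of_lt (hlp' j _)))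
    · have := hdp.lt_iff_lt.1 h1
      have := hdp.lt_iff_lt.1 h2
      simp [Fin.lt_def] at *
      omega
    · exact absurd h2 (not_lt.2 (le_of_lt (hpr' _ j)))
  have hnpr : ∀ (i : ℕ) (h : i + 1 < R), ∀ k : ι,
      c k ∉ Set.Ioo (dr ⟨i, by omega⟩) (dr ⟨i + 1, h⟩) := by
    intro i h k
    rintro ⟨h1, h2⟩
    rcases k with j | j | j <;> simp only [hc, Sum.elim_inl, Sum.elim_inr] at h1 h2
    · exact absurd h1 (not_lt.2 (le_of_lt (hlr' j _)))
    · exact absurd h1 (not_lt.2 (le_of_lt (hpr' j _)))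
    · have := hdr.lt_iff_lt.1 h1
      have := hdr.lt_iff_lt.1 h2
      simp [Fin.lt_def] at *
      omega
  -- existence of a zero in each gap
  have hexl : ∀ i : Fin (L - 1), ∃ x : ℝ,
      x ∈ Set.Ioo (dl ⟨i.val, by omega⟩) (dl ⟨i.val + 1, by omega⟩) ∧ f (x : ℂ) = 0 := by
    intro i
    have := gap_zero c hcinj sR (Sum.inl ⟨i.val, by omega⟩) (Sum.inl ⟨i.val + 1, by omega⟩)
      (by simp only [hc, Sum.elim_inl]; exact hdl (by simp [Fin.lt_def]))
      (by simp [hsR]) (by simp [hsR])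
      (by simpa only [hc, Sum.elim_inl] using hnpl i.val (by omega))
    simp only [hc, Sum.elim_inl] at this
    obtain ⟨x, hx1, hx2⟩ := this
    exact ⟨x, hx1, (hfg0 x).2 hx2⟩
  have hexr : ∀ i : Fin (R - 1), ∃ x : ℝ,
      x ∈ Set.Ioo (dr ⟨i.val, by omega⟩) (dr ⟨i.val + 1, by omega⟩) ∧ f (x : ℂ) = 0 := by
    intro i
    have := gap_zero c hcinj sR (Sum.inr (Sum.inr ⟨i.val, by omega⟩))
      (Sum.inr (Sum.inr ⟨i.val + 1, by omega⟩))
      (by simp only [hc, Sum.elim_inr]; exact hdr (by simp [Fin.lt_def]))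
      (by simp [hsR]) (by simp [hsR])
      (by simpa only [hc, Sum.elim_inr] using hnpr i.val (by omega))
    simp only [hc, Sum.elim_inr] at this
    obtain ⟨x, hx1, hx2⟩ := this
    exact ⟨x, hx1, (hfg0 x).2 hx2⟩
  have hexp : ∀ i : Fin (P - 1), ∃ x : ℝ,
      x ∈ Set.Ioo (dp ⟨i.val, by omega⟩) (dp ⟨i.val + 1, by omega⟩) ∧ f (x : ℂ) = 0 := by
    intro i
    have := gap_zero c hcinj (fun k => -sR k) (Sum.inr (Sum.inl ⟨i.val, by omega⟩))
      (Sum.inr (Sum.inl ⟨i.val + 1, by omega⟩))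
      (by simp only [hc, Sum.elim_inr, Sum.elim_inl]; exact hdp (by simp [Fin.lt_def]))
      (by simp [hsR]) (by simp [hsR])
      (by simpa only [hc, Sum.elim_inr, Sum.elim_inl] using hnpp i.val (by omega))
    simp only [hc, Sum.elim_inr, Sum.elim_inl] at this
    obtain ⟨x, hx1, hx2⟩ := this
    refine ⟨x, hx1, (hfg0 x).2 ?_⟩
    have : -(∑ k : ι, sR k / (x - c k)) = 0 := by
      rw [← hx2, ← Finset.sum_neg_distrib]
      apply Finset.sum_congr rfl
      intro k _
      rw [neg_div]
    rw [hgdef]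
    simpa using this
  choose xl hxl using hexl
  choose xp hxp using hexp
  choose xr hxr using hexr
  -- bounds helpers
  have hdlle : ∀ a b : Fin L, a.val ≤ b.val → dl a ≤ dl b := fun a b h => hdl.monotone h
  have hdple : ∀ a b : Fin P, a.val ≤ b.val → dp a ≤ dp b := fun a b h => hdp.monotone h
  have hdrle : ∀ a b : Fin R, a.val ≤ b.val → dr a ≤ dr b := fun a b h => hdr.monotone h
  have hxl_hi : ∀ i : Fin (L - 1), xl i < dl ⟨L - 1, by omega⟩ := fun i =>
    lt_of_lt_of_le (hxl i).1.2 (hdlle _ _ (by exact Nat.succ_le_of_lt i.isLt))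
  have hxl_lo : ∀ i : Fin (L - 1), dl ⟨0, by omega⟩ < xl i := fun i =>
    lt_of_le_of_lt (hdlle _ _ (by exact Nat.zero_le _)) (hxl i).1.1
  have hxp_hi : ∀ j : Fin (P - 1), xp j < dp ⟨P - 1, by omega⟩ := fun j =>
    lt_of_lt_of_le (hxp j).1.2 (hdple _ _ (by exact Nat.succ_le_of_lt j.isLt))
  have hxp_lo : ∀ j : Fin (P - 1), dp ⟨0, by omega⟩ < xp j := fun j =>
    lt_of_le_of_lt (hdple _ _ (by exact Nat.zero_le _)) (hxp j).1.1
  have hxr_hi : ∀ k : Fin (R - 1), xr k < dr ⟨R - 1, by omega⟩ := fun k =>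
    lt_of_lt_of_le (hxr k).1.2 (hdrle _ _ (by exact Nat.succ_le_of_lt k.isLt))
  have hxr_lo : ∀ k : Fin (R - 1), dr ⟨0, by omega⟩ < xr k := fun k =>
    lt_of_le_of_lt (hdrle _ _ (by exact Nat.zero_le _)) (hxr k).1.1
  -- cross-family bounds
  have hxlp : ∀ (i : Fin (L - 1)) (a : Fin P), xl i < dp a := fun i a =>
    lt_of_lt_of_le (lt_trans (hxl_hi i) hlp) (hdple _ _ (by exact Nat.zero_le _))
  have hxlr : ∀ (i : Fin (L - 1)) (a : Fin R), xl i < dr a := fun i a =>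
    lt_trans (hxl_hi i) (hlr' _ a)
  have hxpr : ∀ (j : Fin (P - 1)) (a : Fin R), xp j < dr a := fun j a =>
    lt_trans (hxp_hi j) (hpr' _ a)
  have hlxp : ∀ (a : Fin L) (j : Fin (P - 1)), dl a < xp j := fun a j =>
    lt_trans (hlp' a ⟨0, by omega⟩) (hxp_lo j)
  have hlxr : ∀ (a : Fin L) (k : Fin (R - 1)), dl a < xr k := fun a k =>
    lt_trans (hlr' a ⟨0, by omega⟩) (hxr_lo k)
  have hpxr : ∀ (a : Fin P) (k : Fin (R - 1)), dp a < xr k := fun a k =>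
    lt_trans (hpr' a ⟨0, by omega⟩) (hxr_lo k)
  have hlxl : ∀ (a : Fin L) (i : Fin (L - 1)), a.val = 0 → dl a < xl i := fun a i ha =>
    lt_of_le_of_lt (hdlle _ _ (by omega)) (hxl i).1.1
  have hxlxp : ∀ i j, xl i < xp j := fun i j => lt_trans (hxlp i _) (hxp j).1.1
  have hxpxr : ∀ j k, xp j < xr k := fun j k => lt_trans (hxpr j _) (hxr k).1.1
  have hxlxr : ∀ i k, xl i < xr k := fun i k => lt_trans (hxlr i _) (hxr k).1.1
  -- strict monotonicity and injectivity of the gap roots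
  have hxlmono : ∀ i i' : Fin (L - 1), i.val < i'.val → xl i < xl i' := fun i i' h =>
    lt_trans (lt_of_lt_of_le (hxl i).1.2 (hdlle _ _ (by exact Nat.succ_le_of_lt h)))
      (hxl i').1.1
  have hxpmono : ∀ i i' : Fin (P - 1), i.val < i'.val → xp i < xp i' := fun i i' h =>
    lt_trans (lt_of_lt_of_le (hxp i).1.2 (hdple _ _ (by exact Nat.succ_le_of_lt h)))
      (hxp i').1.1
  have hxrmono : ∀ i i' : Fin (R - 1), i.val < i'.val → xr i < xr i' := fun i i' h =>
    lt_trans (lt_of_lt_of_le (hxr i).1.2 (hdrle _ _ (by exact Nat.succ_le_of_lt h)))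
      (hxr i').1.1
  have hxlinj : Function.Injective xl := by
    intro i i' h
    rcases Nat.lt_trichotomy i.val i'.val with hlt | he | hgt
    · exact absurd h (ne_of_lt (hxlmono _ _ hlt))
    · exact Fin.ext he
    · exact absurd h (ne_of_gt (hxlmono _ _ hgt))
  have hxpinj : Function.Injective xp := by
    intro i i' h
    rcases Nat.lt_trichotomy i.val i'.val with hlt | he | hgt
    · exact absurd h (ne_of_lt (hxpmono _ _ hlt))
    · exact Fin.ext he
    · exact absurd h (ne_of_gt (hxpmono _ _ hgt))
  have hxrinj : Function.Injective xr := by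
    intro i i' h
    rcases Nat.lt_trichotomy i.val i'.val with hlt | he | hgt
    · exact absurd h (ne_of_lt (hxrmono _ _ hlt))
    · exact Fin.ext he
    · exact absurd h (ne_of_gt (hxrmono _ _ hgt))
  -- the finite set of all roots
  set Tl : Finset ℂ := Finset.image (fun i : Fin (L - 1) => ((xl i : ℝ) : ℂ)) Finset.univ
    with hTl
  set Tp : Finset ℂ := Finset.image (fun j : Fin (P - 1) => ((xp j : ℝ) : ℂ)) Finset.univ
    with hTp
  set Tr : Finset ℂ := Finset.image (fun k : Fin (R - 1) => ((xr k : ℝ) : ℂ)) Finset.univ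
    with hTr
  set Tz : Finset ℂ := {z₀, (starRingEnd ℂ) z₀} with hTz
  set T : Finset ℂ := ((Tl ∪ Tp) ∪ Tr) ∪ Tz with hT
  have hmemT : ∀ z : ℂ, z ∈ T ↔ ((∃ i, ((xl i : ℝ) : ℂ) = z) ∨ (∃ j, ((xp j : ℝ) : ℂ) = z) ∨
      (∃ k, ((xr k : ℝ) : ℂ) = z) ∨ z = z₀ ∨ z = (starRingEnd ℂ) z₀) := by
    intro z
    simp only [hT, hTl, hTp, hTr, hTz, Finset.mem_union, Finset.mem_image,
      Finset.mem_insert, Finset.mem_singleton, Finset.mem_univ, true_and]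
    rw [or_assoc, or_assoc]
  -- every element of T is a root of N
  have hxlnp : ∀ (i : Fin (L - 1)) (k : ι), xl i ≠ c k := fun i k h =>
    hnpl i.val (by omega) k (h ▸ (hxl i).1)
  have hxpnp : ∀ (j : Fin (P - 1)) (k : ι), xp j ≠ c k := fun j k h =>
    hnpp j.val (by omega) k (h ▸ (hxp j).1)
  have hxrnp : ∀ (j : Fin (R - 1)) (k : ι), xr j ≠ c k := fun j k h =>
    hnpr j.val (by omega) k (h ▸ (hxr j).1)
  have hnpim : ∀ z : ℂ, z.im ≠ 0 → ∀ k : ι, z ≠ ((c k : ℝ) : ℂ) := fun z hz k h =>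
    hz (by rw [h]; exact Complex.ofReal_im _)
  have hconjim : ((starRingEnd ℂ) z₀).im ≠ 0 := by simpa using hz₀im
  have hfconj : ∀ z : ℂ, f ((starRingEnd ℂ) z) = (starRingEnd ℂ) (f z) := by
    intro z
    rw [hf' z, hf' ((starRingEnd ℂ) z), map_sum]
    apply Finset.sum_congr rfl
    intro k _
    rw [map_div₀, map_sub, Complex.conj_ofReal, Complex.conj_ofReal]
  have hz₀conj : f ((starRingEnd ℂ) z₀) = 0 := by rw [hfconj, hz₀, map_zero]
  have hTroots : ∀ z ∈ T, N.eval z = 0 := by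
    intro z hz
    rw [hmemT] at hz
    rcases hz with ⟨i, rfl⟩ | ⟨j, rfl⟩ | ⟨k, rfl⟩ | he | he
    · exact (keyf _ fun k h => hxlnp i k (Complex.ofReal_inj.1 h)).1 (hxl i).2
    · exact (keyf _ fun k h => hxpnp j k (Complex.ofReal_inj.1 h)).1 (hxp j).2
    · exact (keyf _ fun k' h => hxrnp k k' (Complex.ofReal_inj.1 h)).1 (hxr k).2
    · rw [he]
      exact (keyf _ (hnpim z₀ hz₀im)).1 hz₀
    · rw [he]
      exact (keyf _ (hnpim _ hconjim)).1 hz₀conj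
  -- cardinality of T
  have hinjl : Function.Injective (fun i : Fin (L - 1) => ((xl i : ℝ) : ℂ)) :=
    fun a b hab => hxlinj (Complex.ofReal_inj.1 hab)
  have hinjp : Function.Injective (fun j : Fin (P - 1) => ((xp j : ℝ) : ℂ)) :=
    fun a b hab => hxpinj (Complex.ofReal_inj.1 hab)
  have hinjr : Function.Injective (fun k : Fin (R - 1) => ((xr k : ℝ) : ℂ)) :=
    fun a b hab => hxrinj (Complex.ofReal_inj.1 hab)
  have hTlcard : Tl.card = L - 1 := by
    rw [hTl, Finset.card_image_of_injective _ hinjl, Finset.card_univ, Fintype.card_fin]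
  have hTpcard : Tp.card = P - 1 := by
    rw [hTp, Finset.card_image_of_injective _ hinjp, Finset.card_univ, Fintype.card_fin]
  have hTrcard : Tr.card = R - 1 := by
    rw [hTr, Finset.card_image_of_injective _ hinjr, Finset.card_univ, Fintype.card_fin]
  have hTzcard : Tz.card = 2 := by
    rw [hTz, Finset.card_insert_of_notMem, Finset.card_singleton]
    rw [Finset.mem_singleton]
    intro h
    exact hz₀im ((Complex.conj_eq_iff_im).1 h.symm)
  have hd_lp : Disjoint Tl Tp := by
    rw [Finset.disjoint_left]
    intro z hz1 hz2
    rw [hTl, Finset.mem_image] at hz1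
    rw [hTp, Finset.mem_image] at hz2
    obtain ⟨i, -, hi⟩ := hz1
    obtain ⟨j, -, hj⟩ := hz2
    exact absurd (Complex.ofReal_inj.1 (hi.trans hj.symm)) (ne_of_lt (hxlxp i j))
  have hd_lpr : Disjoint (Tl ∪ Tp) Tr := by
    rw [Finset.disjoint_left]
    intro z hz1 hz2
    rw [hTr, Finset.mem_image] at hz2
    obtain ⟨k, -, hk⟩ := hz2
    rw [Finset.mem_union] at hz1
    rcases hz1 with hz1 | hz1
    · rw [hTl, Finset.mem_image] at hz1
      obtain ⟨i, -, hi⟩ := hz1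
      exact absurd (Complex.ofReal_inj.1 (hi.trans hk.symm)) (ne_of_lt (hxlxr i k))
    · rw [hTp, Finset.mem_image] at hz1
      obtain ⟨j, -, hj⟩ := hz1
      exact absurd (Complex.ofReal_inj.1 (hj.trans hk.symm)) (ne_of_lt (hxpxr j k))
  have hrealmem : ∀ z ∈ (Tl ∪ Tp) ∪ Tr, z.im = 0 := by
    intro z hz
    rw [Finset.mem_union, Finset.mem_union] at hz
    rcases hz with (hz | hz) | hz
    · rw [hTl, Finset.mem_image] at hz
      obtain ⟨i, -, hi⟩ := hz
      rw [← hi]; exact Complex.ofReal_im _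
    · rw [hTp, Finset.mem_image] at hz
      obtain ⟨j, -, hj⟩ := hz
      rw [← hj]; exact Complex.ofReal_im _
    · rw [hTr, Finset.mem_image] at hz
      obtain ⟨k, -, hk⟩ := hz
      rw [← hk]; exact Complex.ofReal_im _
  have hd_z : Disjoint ((Tl ∪ Tp) ∪ Tr) Tz := by
    rw [Finset.disjoint_right]
    intro z hz1 hz2
    have him : z.im ≠ 0 := by
      rw [hTz, Finset.mem_insert, Finset.mem_singleton] at hz1
      rcases hz1 with rfl | rfl
      · exact hz₀im
      · exact hconjim
    exact him (hrealmem z hz2)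
  have hTcard : T.card = L + P + R - 1 := by
    rw [hT, Finset.card_union_of_disjoint hd_z, Finset.card_union_of_disjoint hd_lpr,
      Finset.card_union_of_disjoint hd_lp, hTlcard, hTpcard, hTrcard, hTzcard]
    omega
  -- every root of N is in T
  have hall : ∀ z : ℂ, N.eval z = 0 → z ∈ T :=
    roots_all hN0 T hTroots (by rw [hTcard]; exact hNdeg)
  have hmaster : ∀ z : ℂ, (∀ k : ι, z ≠ ((c k : ℝ) : ℂ)) → f z = 0 → z ∈ T :=
    fun z hz h0 => hall z ((keyf z hz).1 h0)
  have hrealclass : ∀ x : ℝ, (∀ k : ι, x ≠ c k) → f (x : ℂ) = 0 →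
      (∃ i, x = xl i) ∨ (∃ j, x = xp j) ∨ (∃ k, x = xr k) := by
    intro x hx h0
    have hmem := hmaster (x : ℂ) (fun k h => hx k (Complex.ofReal_inj.1 h)) h0
    rw [hmemT] at hmem
    rcases hmem with ⟨i, hi⟩ | ⟨j, hj⟩ | ⟨k, hk⟩ | he | he
    · exact Or.inl ⟨i, (Complex.ofReal_inj.1 hi).symm⟩
    · exact Or.inr (Or.inl ⟨j, (Complex.ofReal_inj.1 hj).symm⟩)
    · exact Or.inr (Or.inr ⟨k, (Complex.ofReal_inj.1 hk).symm⟩)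
    · exact False.elim (hz₀im (by rw [← he]; exact Complex.ofReal_im x))
    · exact False.elim (hconjim (by rw [← he]; exact Complex.ofReal_im x))
  have hle_last_l : ∀ j : Fin L, dl j ≤ dl ⟨L - 1, by omega⟩ := fun j =>
    hdlle _ _ (by exact Nat.le_pred_of_lt j.isLt)
  have hfst_le_l : ∀ j : Fin L, dl ⟨0, by omega⟩ ≤ dl j := fun j => hdlle _ _ (Nat.zero_le _)
  have hle_last_p : ∀ j : Fin P, dp j ≤ dp ⟨P - 1, by omega⟩ := fun j =>
    hdple _ _ (by exact Nat.le_pred_of_lt j.isLt)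
  have hfst_le_p : ∀ j : Fin P, dp ⟨0, by omega⟩ ≤ dp j := fun j => hdple _ _ (Nat.zero_le _)
  have hle_last_r : ∀ j : Fin R, dr j ≤ dr ⟨R - 1, by omega⟩ := fun j =>
    hdrle _ _ (by exact Nat.le_pred_of_lt j.isLt)
  have hfst_le_r : ∀ j : Fin R, dr ⟨0, by omega⟩ ≤ dr j := fun j => hdrle _ _ (Nat.zero_le _)
  refine ⟨⟨z₀, hz₀im, ?_⟩, ?_, ?_, ?_, ?_, ?_, ?_, ?_, ?_⟩
  · -- the pair of non-real zeros
    ext z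
    simp only [Set.mem_setOf_eq, Set.mem_insert_iff, Set.mem_singleton_iff]
    constructor
    · rintro ⟨him, h0⟩
      have hmem := hmaster z (hnpim z him) h0
      rw [hmemT] at hmem
      rcases hmem with ⟨i, hi⟩ | ⟨j, hj⟩ | ⟨k, hk⟩ | he | he
      · exact False.elim (him (by rw [← hi]; exact Complex.ofReal_im _))
      · exact False.elim (him (by rw [← hj]; exact Complex.ofReal_im _))
      · exact False.elim (him (by rw [← hk]; exact Complex.ofReal_im _))
      · exact Or.inl he
      · exact Or.inr he
    · rintro (rfl | rfl)
      · exact ⟨hz₀im, hz₀⟩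
      · exact ⟨hconjim, hz₀conj⟩
  · -- unique zero in each gap of dl
    intro i h
    refine ⟨xl ⟨i, by omega⟩, ⟨(hxl ⟨i, by omega⟩).1, (hxl ⟨i, by omega⟩).2⟩, ?_⟩
    rintro y ⟨hy1, hy2⟩
    have hynp : ∀ k : ι, y ≠ c k := fun k hk => hnpl i h k (hk ▸ hy1)
    rcases hrealclass y hynp hy2 with ⟨i', rfl⟩ | ⟨j, rfl⟩ | ⟨k, rfl⟩
    · rcases Nat.lt_trichotomy i'.val i with hlt | he | hgt
      · exact False.elim ((lt_asymm hy1.1)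
          (lt_of_lt_of_le (hxl i').1.2 (hdlle _ ⟨i, by omega⟩ (by exact hlt))))
      · exact congrArg xl (Fin.ext he)
      · exact False.elim ((lt_asymm hy1.2)
          (lt_of_le_of_lt (hdlle ⟨i + 1, h⟩ _ (by exact hgt)) (hxl i').1.1))
    · exact False.elim ((lt_asymm hy1.2) (hlxp ⟨i + 1, h⟩ j))
    · exact False.elim ((lt_asymm hy1.2) (hlxr ⟨i + 1, h⟩ k))
  · -- unique zero in each gap of dp
    intro j h
    refine ⟨xp ⟨j, by omega⟩, ⟨(hxp ⟨j, by omega⟩).1, (hxp ⟨j, by omega⟩).2⟩, ?_⟩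
    rintro y ⟨hy1, hy2⟩
    have hynp : ∀ k : ι, y ≠ c k := fun k hk => hnpp j h k (hk ▸ hy1)
    rcases hrealclass y hynp hy2 with ⟨i', rfl⟩ | ⟨j', rfl⟩ | ⟨k, rfl⟩
    · exact False.elim ((lt_asymm hy1.1) (hxlp i' ⟨j, by omega⟩))
    · rcases Nat.lt_trichotomy j'.val j with hlt | he | hgt
      · exact False.elim ((lt_asymm hy1.1)
          (lt_of_lt_of_le (hxp j').1.2 (hdple _ ⟨j, by omega⟩ (by exact hlt))))
      · exact congrArg xp (Fin.ext he)
      · exact False.elim ((lt_asymm hy1.2)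
          (lt_of_le_of_lt (hdple ⟨j + 1, h⟩ _ (by exact hgt)) (hxp j').1.1))
    · exact False.elim ((lt_asymm hy1.2) (hpxr ⟨j + 1, h⟩ k))
  · -- unique zero in each gap of dr
    intro i h
    refine ⟨xr ⟨i, by omega⟩, ⟨(hxr ⟨i, by omega⟩).1, (hxr ⟨i, by omega⟩).2⟩, ?_⟩
    rintro y ⟨hy1, hy2⟩
    have hynp : ∀ k : ι, y ≠ c k := fun k hk => hnpr i h k (hk ▸ hy1)
    rcases hrealclass y hynp hy2 with ⟨i', rfl⟩ | ⟨j, rfl⟩ | ⟨k', rfl⟩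
    · exact False.elim ((lt_asymm hy1.1) (hxlr i' ⟨i, by omega⟩))
    · exact False.elim ((lt_asymm hy1.1) (hxpr j ⟨i, by omega⟩))
    · rcases Nat.lt_trichotomy k'.val i with hlt | he | hgt
      · exact False.elim ((lt_asymm hy1.1)
          (lt_of_lt_of_le (hxr k').1.2 (hdrle _ ⟨i, by omega⟩ (by exact hlt))))
      · exact congrArg xr (Fin.ext he)
      · exact False.elim ((lt_asymm hy1.2)
          (lt_of_le_of_lt (hdrle ⟨i + 1, h⟩ _ (by exact hgt)) (hxr k').1.1))
  · -- real zeros lie in the gaps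
    intro x hx h0
    have hnp : ∀ k : ι, x ≠ c k := by
      intro k hk
      apply hx
      rw [Set.mem_union, Set.mem_union]
      rcases k with j | j | j <;> simp only [hc, Sum.elim_inl, Sum.elim_inr] at hk
      · exact Or.inl (Or.inl ⟨j, hk.symm⟩)
      · exact Or.inl (Or.inr ⟨j, hk.symm⟩)
      · exact Or.inr ⟨j, hk.symm⟩
    rcases hrealclass x hnp h0 with ⟨i, rfl⟩ | ⟨j, rfl⟩ | ⟨k, rfl⟩
    · exact Or.inl ⟨i.val, by have := i.isLt; omega, (hxl i).1⟩
    · exact Or.inr (Or.inl ⟨j.val, by have := j.isLt; omega, (hxp j).1⟩)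
    · exact Or.inr (Or.inr ⟨k.val, by have := k.isLt; omega, (hxr k).1⟩)
  · -- no zero in the left middle gap
    intro x hx h0
    have hnp : ∀ k : ι, x ≠ c k := by
      intro k hk
      rcases k with j | j | j <;> simp only [hc, Sum.elim_inl, Sum.elim_inr] at hk
      · exact absurd (hk ▸ hx.1) (not_lt.2 (hle_last_l j))
      · exact absurd (hk ▸ hx.2) (not_lt.2 (hfst_le_p j))
      · exact absurd (hk ▸ hx.2) (lt_asymm (hpr' ⟨0, by omega⟩ j))
    rcases hrealclass x hnp h0 with ⟨i, rfl⟩ | ⟨j, rfl⟩ | ⟨k, rfl⟩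
    · exact absurd hx.1 (lt_asymm (hxl_hi i))
    · exact absurd hx.2 (lt_asymm (hxp_lo j))
    · exact absurd hx.2 (lt_asymm (hpxr ⟨0, by omega⟩ k))
  · -- no zero in the right middle gap
    intro x hx h0
    have hnp : ∀ k : ι, x ≠ c k := by
      intro k hk
      rcases k with j | j | j <;> simp only [hc, Sum.elim_inl, Sum.elim_inr] at hk
      · exact absurd (hk ▸ hx.1) (lt_asymm (hlp' j ⟨P - 1, by omega⟩))
      · exact absurd (hk ▸ hx.1) (not_lt.2 (hle_last_p j))
      · exact absurd (hk ▸ hx.2) (not_lt.2 (hfst_le_r j))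
    rcases hrealclass x hnp h0 with ⟨i, rfl⟩ | ⟨j, rfl⟩ | ⟨k, rfl⟩
    · exact absurd hx.1 (lt_asymm (hxlp i ⟨P - 1, by omega⟩))
    · exact absurd hx.1 (lt_asymm (hxp_hi j))
    · exact absurd hx.2 (lt_asymm (hxr_lo k))
  · -- no zero to the left of everything
    intro x hx h0
    have hnp : ∀ k : ι, x ≠ c k := by
      intro k hk
      rcases k with j | j | j <;> simp only [hc, Sum.elim_inl, Sum.elim_inr] at hk
      · exact absurd (hk ▸ hx) (not_lt.2 (hfst_le_l j))
      · exact absurd (hk ▸ hx) (lt_asymm (hlp' ⟨0, by omega⟩ j))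
      · exact absurd (hk ▸ hx) (lt_asymm (hlr' ⟨0, by omega⟩ j))
    rcases hrealclass x hnp h0 with ⟨i, rfl⟩ | ⟨j, rfl⟩ | ⟨k, rfl⟩
    · exact absurd hx (lt_asymm (hxl_lo i))
    · exact absurd hx (lt_asymm (hlxp ⟨0, by omega⟩ j))
    · exact absurd hx (lt_asymm (hlxr ⟨0, by omega⟩ k))
  · -- no zero to the right of everything
    intro x hx h0
    have hnp : ∀ k : ι, x ≠ c k := by
      intro k hk
      rcases k with j | j | j <;> simp only [hc, Sum.elim_inl, Sum.elim_inr] at hk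
      · exact absurd (hk ▸ hx) (lt_asymm (hlr' j ⟨R - 1, by omega⟩))
      · exact absurd (hk ▸ hx) (lt_asymm (hpr' j ⟨R - 1, by omega⟩))
      · exact absurd (hk ▸ hx) (not_lt.2 (hle_last_r j))
    rcases hrealclass x hnp h0 with ⟨i, rfl⟩ | ⟨j, rfl⟩ | ⟨k, rfl⟩
    · exact absurd hx (lt_asymm (hxlr i ⟨R - 1, by omega⟩))
    · exact absurd hx (lt_asymm (hxpr j ⟨R - 1, by omega⟩))
    · exact absurd hx (lt_asymm (hxr_hi k))
end

section
/- Let ν be a Borel probability measure on ℝ that is absolutely continuous with respect to Lebesgue measure with density bounded by 1 almost everywhere, and let 𝐱 ∈ ℝ and 0 < η < 1. For z ∈ ℂ∖ℝ define G'(z) = Log(z + 1 − 𝐱 − η) − Log(z − 𝐱) − ∫_ℝ 1/(z − y) dν(y), where Log is the principal branch of the complex logarithm. Then the set of non-real solutions of G'(z) = 0 is invariant under complex conjugation and has at most two elements; i.e., the equation G'(z) = 0 has either 0 or 2 non-real roots, and in the latter case they are complex conjugates of each other. -/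
/-!
Write `R ν z = ∫ (y - z)⁻¹ dν(y)` (Mathlib's `resolventTransform`), so that the integral in `G'`
is `-R ν z`. Exponentiating `G' z = 0` shows that a root `z` is a fixed point of
`Φ z = x₀ + (1 - η) / (exp (-R ν z) - 1)`. On the upper half-plane `0 < Im R ν z < π`: the upper
bound because the density bound gives `ν ≤ volume`, and `Im R ν z` is `π` times the integral of a
Cauchy density, which has total Lebesgue mass one. Hence `Φ` is a holomorphic self-map of the upper
half-plane, and by the equality case of the Schwarz lemma (transported by a Cayley transform) two
distinct fixed points would force `Φ = id`. This is impossible because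
`Φ (x₀ + T * I) - x₀ ~ (1 - η) * T * I` as `T → ∞`. So there is at most one root in the upper
half-plane, and since `G' (conj z) = conj (G' z)` the roots in the lower half-plane are the
conjugates of those in the upper one.
-/

open Complex MeasureTheory Metric Set Filter Asymptotics ProbabilityTheory
open UpperHalfPlane (upperHalfPlaneSet)
open scoped ComplexConjugate Topology Real

lemma MeasureTheory.integral_lt_integral_of_measure_lt {α : Type*} [MeasurableSpace α]
    {μ ν : Measure α} [IsFiniteMeasure ν] (hlt : ν < μ) {f : α → ℝ} (hf : Integrable f μ)
    (hpos : ∀ x, 0 < f x) :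
    ∫ x, f x ∂ν < ∫ x, f x ∂μ := by
  have hsub : 0 < ∫ x, f x ∂(μ - ν) := by
    rw [integral_pos_iff_support_of_nonneg (fun x => (hpos x).le)
      (hf.mono_measure Measure.sub_le), Function.support_eq_univ fun x => (hpos x).ne',
      Measure.measure_univ_pos]
    intro h
    apply hlt.ne
    conv_rhs => rw [← Measure.sub_add_cancel_of_le hlt.le, h, zero_add]
  calc ∫ x, f x ∂ν < ∫ x, f x ∂(μ - ν) + ∫ x, f x ∂ν := lt_add_of_pos_left _ hsub
    _ = ∫ x, f x ∂μ := by
      rw [← integral_add_measure (hf.mono_measure Measure.sub_le) (hf.mono_measure hlt.le),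
        Measure.sub_add_cancel_of_le hlt.le]

lemma MeasureTheory.Measure.le_of_rnDeriv_le_one {α : Type*} [MeasurableSpace α]
    {μ ν : Measure α} [ν.HaveLebesgueDecomposition μ] (hac : ν ≪ μ)
    (h : ∀ᵐ x ∂μ, ν.rnDeriv μ x ≤ 1) : ν ≤ μ :=
  calc ν = μ.withDensity (ν.rnDeriv μ) := (Measure.withDensity_rnDeriv_eq ν μ hac).symm
    _ ≤ μ.withDensity 1 := withDensity_mono h
    _ = μ := withDensity_one

section Resolvent

variable {ν : Measure ℝ} {z : ℂ}

lemma notMem_image_algebraMap_of_im_ne_zero (hz : z.im ≠ 0) (s : Set ℝ) :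
    z ∉ algebraMap ℝ ℂ '' s := by
  rintro ⟨y, -, rfl⟩
  simp at hz

lemma resolvent_ofReal (y : ℝ) : resolvent z y = ((y : ℂ) - z)⁻¹ := by
  simp [resolvent, Ring.inverse_eq_inv']

lemma integral_one_div_sub_ofReal :
    ∫ y, 1 / (z - (y : ℂ)) ∂ν = -resolventTransform ν z := by
  rw [resolventTransform_apply, ← integral_neg]
  congr 1 with y
  rw [resolvent_ofReal, one_div, ← inv_neg, neg_sub]

lemma resolventTransform_conj :
    resolventTransform ν (conj z) = conj (resolventTransform ν z) := by
  simp only [resolventTransform_apply, resolvent_ofReal, ← integral_conj, map_inv₀, map_sub,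
    conj_ofReal]

lemma differentiableOn_resolventTransform [IsFiniteMeasure ν] :
    DifferentiableOn ℂ (resolventTransform ν) upperHalfPlaneSet :=
  analyticOn_resolventTransform.differentiableOn.mono fun _ hz =>
    notMem_image_algebraMap_of_im_ne_zero (ne_of_gt hz) _

lemma im_resolvent_ofReal (hz : 0 < z.im) (y : ℝ) :
    (resolvent z y).im = π * cauchyPDFReal z.re z.im.toNNReal y := by
  rw [resolvent_ofReal, inv_im, cauchyPDFReal_def, Real.coe_toNNReal _ hz.le, normSq_apply]
  simp only [sub_re, sub_im, ofReal_re, ofReal_im]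
  have hpos : 0 < (y - z.re) ^ 2 + z.im ^ 2 := by positivity
  rw [show (y - z.re) * (y - z.re) + (0 - z.im) * (0 - z.im) = (y - z.re) ^ 2 + z.im ^ 2 by ring]
  field_simp
  ring

lemma integrable_cauchyPDFReal_of_isFiniteMeasure [IsFiniteMeasure ν] (x₀ : ℝ) (γ : NNReal) :
    Integrable (cauchyPDFReal x₀ γ) ν := by
  refine Integrable.of_bound (measurable_cauchyPDFReal x₀ γ).aestronglyMeasurable (π⁻¹ * γ⁻¹)
    (ae_of_all _ fun y => ?_)
  rw [Real.norm_of_nonneg (by rw [cauchyPDFReal_def]; positivity), cauchyPDFReal_def']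
  exact mul_le_of_le_one_right (by positivity)
    (inv_le_one_of_one_le₀ (le_add_of_nonneg_right (sq_nonneg _)))

lemma im_resolventTransform [IsFiniteMeasure ν] (hz : 0 < z.im) :
    (resolventTransform ν z).im = π * ∫ y, cauchyPDFReal z.re z.im.toNNReal y ∂ν := by
  have hint := integrable_resolvent (μ := ν)
    (notMem_image_algebraMap_of_im_ne_zero (ne_of_gt hz) ν.support)
  rw [resolventTransform_apply, ← integral_const_mul]
  simp_rw [← im_resolvent_ofReal hz]
  exact (integral_im hint).symm

lemma im_resolventTransform_pos [IsFiniteMeasure ν] [NeZero ν] (hz : 0 < z.im) :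
    0 < (resolventTransform ν z).im := by
  have hγ : z.im.toNNReal ≠ 0 := by simpa using hz
  rw [im_resolventTransform hz]
  refine mul_pos Real.pi_pos ?_
  rw [integral_pos_iff_support_of_nonneg (fun y => (cauchyPDF_pos _ hγ y).le)
    (integrable_cauchyPDFReal_of_isFiniteMeasure _ _),
    Function.support_eq_univ fun y => (cauchyPDF_pos _ hγ y).ne']
  exact Measure.measure_univ_pos.2 (NeZero.ne ν)

lemma im_resolventTransform_lt_pi [IsFiniteMeasure ν] (hle : ν ≤ volume) (hz : 0 < z.im) :
    (resolventTransform ν z).im < π := by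
  have hγ : z.im.toNNReal ≠ 0 := by simpa using hz
  have hne : ν ≠ volume := fun h => by
    simpa [h] using measure_ne_top ν univ
  rw [im_resolventTransform hz]
  refine mul_lt_of_lt_one_right Real.pi_pos ?_
  rw [← integral_cauchyPDFReal_eq_one z.re hγ]
  exact integral_lt_integral_of_measure_lt (lt_of_le_of_ne hle hne) (integrable_cauchyPDFReal _)
    (cauchyPDF_pos _ hγ)

lemma tendsto_inv_ofReal_mul_I_atTop : Tendsto (fun T : ℝ => ((T : ℂ) * I)⁻¹) atTop (𝓝 0) := by
  rw [tendsto_zero_iff_norm_tendsto_zero]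
  simp only [norm_inv, norm_mul, norm_I, mul_one, norm_real, Real.norm_eq_abs]
  exact tendsto_inv_atTop_zero.comp tendsto_abs_atTop_atTop

lemma tendsto_mul_I_mul_resolventTransform [IsFiniteMeasure ν] (x₀ : ℝ) :
    Tendsto (fun T : ℝ => (T * I) * resolventTransform ν (x₀ + T * I)) atTop
      (𝓝 (-(ν.real univ : ℂ))) := by
  have hlim (y : ℝ) :
      Tendsto (fun T : ℝ => (T * I) * resolvent ((x₀ : ℂ) + T * I) y) atTop (𝓝 (-1)) := by
    have h := ((tendsto_inv_ofReal_mul_I_atTop.const_mul ((y : ℂ) - x₀)).sub_const 1).inv₀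
      (by norm_num)
    rw [mul_zero, zero_sub, inv_neg, inv_one] at h
    refine h.congr' ?_
    filter_upwards [eventually_ne_atTop 0] with T hT
    have hTI : (T : ℂ) * I ≠ 0 := mul_ne_zero (ofReal_ne_zero.2 hT) I_ne_zero
    have hsplit : ((y : ℂ) - x₀) * ((T : ℂ) * I)⁻¹ - 1 = ((y : ℂ) - (x₀ + T * I)) / (T * I) := by
      rw [← sub_sub, sub_div, div_self hTI, div_eq_mul_inv]
    rw [hsplit, inv_div, resolvent_ofReal, div_eq_mul_inv]
  have hbound : ∀ᶠ T : ℝ in atTop, ∀ᵐ y ∂ν, ‖(T * I) * resolvent ((x₀ : ℂ) + T * I) y‖ ≤ 1 := by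
    filter_upwards [eventually_gt_atTop 0] with T hT
    refine ae_of_all _ fun y => ?_
    have hle : T ≤ ‖(y : ℂ) - (x₀ + T * I)‖ := by
      simpa [abs_of_pos hT] using abs_im_le_norm ((y : ℂ) - (x₀ + T * I))
    rw [resolvent_ofReal, norm_mul, norm_inv, norm_mul, norm_I, mul_one, norm_real,
      Real.norm_of_nonneg hT.le, ← div_eq_mul_inv, div_le_one (hT.trans_le hle)]
    exact hle
  have key := tendsto_integral_filter_of_dominated_convergence (fun _ => (1 : ℝ))
    (Eventually.of_forall fun T => by fun_prop) hbound (integrable_const 1) (ae_of_all _ hlim)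
  simpa [integral_const, integral_const_mul, resolventTransform_apply] using key

end Resolvent

lemma tendsto_mul_cexp_sub_one {α : Type*} {l : Filter α} {a w : α → ℂ} {c : ℂ}
    (haw : Tendsto (fun x => a x * w x) l (𝓝 c)) (hw : Tendsto w l (𝓝 0)) :
    Tendsto (fun x => a x * (exp (w x) - 1)) l (𝓝 c) := by
  have ho : (fun x => exp (w x) - 1 - w x) =o[l] w := by
    simpa [Function.comp_def] using
      (hasDerivAt_iff_isLittleO.1 (hasDerivAt_exp 0)).comp_tendsto hw
  have hsmall : Tendsto (fun x => a x * (exp (w x) - 1 - w x)) l (𝓝 0) :=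
    (isLittleO_one_iff ℂ).1 (((isBigO_refl a l).mul_isLittleO ho).trans_isBigO
      (haw.isBigO_one ℂ))
  have h := haw.add hsmall
  rw [add_zero] at h
  exact h.congr fun x => by ring

lemma im_inv_cexp_sub_one_pos {w : ℂ} (h0 : w.im < 0) (hπ : -π < w.im) :
    0 < ((exp w - 1)⁻¹).im := by
  have him : (exp w - 1).im < 0 := by
    rw [sub_im, one_im, sub_zero, exp_im]
    exact mul_neg_of_pos_of_neg (Real.exp_pos _) (Real.sin_neg_of_neg_of_neg_pi_lt h0 hπ)
  have hne : exp w - 1 ≠ 0 := fun h => by simp [h] at him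
  rw [inv_im]
  exact div_pos (neg_pos.2 him) (normSq_pos.2 hne)

lemma eq_div_cexp_sub_one_of_log_sub_log_eq {a b w : ℂ} (ha : a ≠ 0) (hb : b ≠ 0) (hab : a ≠ b)
    (h : log a - log b = w) : b = (a - b) / (exp w - 1) := by
  have hexp : exp w = a / b := by rw [← h, exp_sub, exp_log ha, exp_log hb]
  have hab' : a - b ≠ 0 := sub_ne_zero.2 hab
  rw [hexp, div_sub_one hb, div_div_eq_mul_div, mul_div_cancel_left₀ _ hab']

lemma log_conj_of_im_ne_zero {z : ℂ} (hz : z.im ≠ 0) : log (conj z) = conj (log z) :=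
  log_conj z fun h => hz (arg_eq_pi_iff.1 h).2

noncomputable def cayleyAt (a z : ℂ) : ℂ := (z - a) / (z - conj a)

noncomputable def cayleyAtSymm (a w : ℂ) : ℂ := (a - conj a * w) / (1 - w)

section Cayley

variable {a : ℂ}

lemma sub_conj_ne_zero (ha : 0 < a.im) {z : ℂ} (hz : 0 < z.im) : z - conj a ≠ 0 := by
  intro h
  have := congrArg im h
  simp only [sub_im, conj_im, zero_im] at this
  linarith

lemma one_sub_ne_zero_of_mem_ball {w : ℂ} (hw : w ∈ ball (0 : ℂ) 1) : 1 - w ≠ 0 := by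
  rintro h
  rw [← sub_eq_zero.1 h] at hw
  simp at hw

lemma mapsTo_cayleyAt (ha : 0 < a.im) : MapsTo (cayleyAt a) upperHalfPlaneSet (ball 0 1) := by
  intro z hz
  have hlt : normSq (z - a) < normSq (z - conj a) := by
    simp only [normSq_apply, sub_re, sub_im, conj_re, conj_im]
    nlinarith [hz.out]
  rw [mem_ball_zero_iff, cayleyAt, norm_div, div_lt_one (norm_pos_iff.2 (sub_conj_ne_zero ha hz))]
  rw [normSq_eq_norm_sq, normSq_eq_norm_sq] at hlt
  exact lt_of_pow_lt_pow_left₀ 2 (norm_nonneg _) hlt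

lemma mapsTo_cayleyAtSymm (ha : 0 < a.im) :
    MapsTo (cayleyAtSymm a) (ball 0 1) upperHalfPlaneSet := by
  intro w hw
  have hw1 : normSq w < 1 := by
    rw [normSq_eq_norm_sq]
    exact pow_lt_one₀ (norm_nonneg w) (mem_ball_zero_iff.1 hw) two_ne_zero
  have him : (cayleyAtSymm a w).im = a.im * (1 - normSq w) / normSq (1 - w) := by
    simp only [cayleyAtSymm, div_im, normSq_apply, sub_re, sub_im, mul_re, mul_im, conj_re,
      conj_im, one_re, one_im]
    ring
  rw [mem_ofPred_eq, him]
  exact div_pos (mul_pos ha (by linarith)) (normSq_pos.2 (one_sub_ne_zero_of_mem_ball hw))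

lemma cayleyAtSymm_cayleyAt (ha : 0 < a.im) {z : ℂ} (hz : 0 < z.im) :
    cayleyAtSymm a (cayleyAt a z) = z := by
  have hz' := sub_conj_ne_zero ha hz
  rw [cayleyAtSymm, div_eq_iff (one_sub_ne_zero_of_mem_ball (mapsTo_cayleyAt ha hz)), cayleyAt]
  field_simp
  ring

lemma differentiableOn_cayleyAt (ha : 0 < a.im) :
    DifferentiableOn ℂ (cayleyAt a) upperHalfPlaneSet :=
  (differentiableOn_id.sub_const a).div (differentiableOn_id.sub_const _)
    fun _ hz => sub_conj_ne_zero ha hz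

lemma differentiableOn_cayleyAtSymm :
    DifferentiableOn ℂ (cayleyAtSymm a) (ball 0 1) :=
  ((differentiableOn_const a).sub (differentiableOn_id.const_mul _)).div
    ((differentiableOn_const 1).sub differentiableOn_id) fun _ hw => one_sub_ne_zero_of_mem_ball hw

end Cayley

theorem eqOn_id_of_mapsTo_ball_of_fixed {g : ℂ → ℂ} (hd : DifferentiableOn ℂ g (ball 0 1))
    (hmaps : MapsTo g (ball 0 1) (ball 0 1)) (h0 : g 0 = 0) {w : ℂ} (hw : w ∈ ball (0 : ℂ) 1)
    (hw0 : w ≠ 0) (hgw : g w = w) : EqOn g id (ball 0 1) := by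
  have hslope : dslope g 0 w = 1 := by
    rw [dslope_of_ne _ hw0, slope_def_field, hgw, h0, sub_zero, div_self hw0]
  have haff := affine_of_mapsTo_ball_of_norm_dslope_eq_div (R₂ := 1) hd
    (by rw [h0]; exact hmaps.mono_right ball_subset_closedBall) hw (by simp [hslope])
  intro z hz
  simpa [hslope, h0] using haff hz

theorem eqOn_id_of_mapsTo_upperHalfPlaneSet_of_fixed {f : ℂ → ℂ}
    (hd : DifferentiableOn ℂ f upperHalfPlaneSet)
    (hmaps : MapsTo f upperHalfPlaneSet upperHalfPlaneSet) {z₁ z₂ : ℂ} (h₁ : 0 < z₁.im)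
    (h₂ : 0 < z₂.im) (hne : z₁ ≠ z₂) (hf₁ : f z₁ = z₁) (hf₂ : f z₂ = z₂) :
    EqOn f id upperHalfPlaneSet := by
  set g := cayleyAt z₁ ∘ f ∘ cayleyAtSymm z₁
  have hg : ∀ z ∈ upperHalfPlaneSet, g (cayleyAt z₁ z) = cayleyAt z₁ (f z) := fun z hz => by
    simp only [g, Function.comp_apply, cayleyAtSymm_cayleyAt h₁ hz]
  have hC₁ : cayleyAt z₁ z₁ = 0 := by simp [cayleyAt]
  have hid : EqOn g id (ball 0 1) := by
    refine eqOn_id_of_mapsTo_ball_of_fixed ?_ ?_ ?_ (mapsTo_cayleyAt h₁ h₂)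
      (div_ne_zero (sub_ne_zero.2 hne.symm) (sub_conj_ne_zero h₁ h₂)) (by rw [hg z₂ h₂, hf₂])
    · exact (differentiableOn_cayleyAt h₁).comp
        (hd.comp differentiableOn_cayleyAtSymm (mapsTo_cayleyAtSymm h₁))
        (hmaps.comp (mapsTo_cayleyAtSymm h₁))
    · exact (mapsTo_cayleyAt h₁).comp (hmaps.comp (mapsTo_cayleyAtSymm h₁))
    · rw [← hC₁, hg z₁ h₁, hf₁]
  intro z hz
  calc f z = cayleyAtSymm z₁ (cayleyAt z₁ (f z)) := (cayleyAtSymm_cayleyAt h₁ (hmaps hz)).symm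
    _ = cayleyAtSymm z₁ (cayleyAt z₁ z) := by rw [← hg z hz, hid (mapsTo_cayleyAt h₁ hz), id]
    _ = z := cayleyAtSymm_cayleyAt h₁ hz

noncomputable def fixedPointMap (ν : Measure ℝ) (x₀ η : ℝ) (z : ℂ) : ℂ :=
  x₀ + ((1 - η : ℝ) : ℂ) / (exp (-resolventTransform ν z) - 1)

section FixedPointMap

variable {ν : Measure ℝ} {x₀ η : ℝ}

lemma im_inv_cexp_neg_resolventTransform_sub_one_pos [IsFiniteMeasure ν] [NeZero ν]
    (hle : ν ≤ volume) {z : ℂ} (hz : 0 < z.im) :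
    0 < ((exp (-resolventTransform ν z) - 1)⁻¹).im :=
  im_inv_cexp_sub_one_pos (by simpa using im_resolventTransform_pos hz)
    (by simpa using im_resolventTransform_lt_pi hle hz)

lemma mapsTo_fixedPointMap [IsFiniteMeasure ν] [NeZero ν] (hle : ν ≤ volume) (hη : η < 1) :
    MapsTo (fixedPointMap ν x₀ η) upperHalfPlaneSet upperHalfPlaneSet := fun z hz => by
  have h := im_inv_cexp_neg_resolventTransform_sub_one_pos hle hz
  simp only [fixedPointMap, div_eq_mul_inv, mem_ofPred_eq, add_im, ofReal_im, zero_add,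
    im_ofReal_mul]
  exact mul_pos (by linarith) h

lemma differentiableOn_fixedPointMap [IsFiniteMeasure ν] [NeZero ν] (hle : ν ≤ volume) :
    DifferentiableOn ℂ (fixedPointMap ν x₀ η) upperHalfPlaneSet :=
  (differentiableOn_const _).add ((differentiableOn_const _).div
    (differentiableOn_resolventTransform.neg.cexp.sub_const 1) fun z hz h0 => by
      simpa [h0] using im_inv_cexp_neg_resolventTransform_sub_one_pos hle hz)

lemma fixedPointMap_eq_self_of_log_sub_log_eq (hη : η ≠ 1) {z : ℂ} (hz : z.im ≠ 0)
    (h : log (z + 1 - x₀ - η) - log (z - x₀) = -resolventTransform ν z) :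
    fixedPointMap ν x₀ η z = z := by
  have ha : z + 1 - x₀ - η ≠ 0 := fun h0 => hz (by simpa using congrArg im h0)
  have hb : z - x₀ ≠ 0 := fun h0 => hz (by simpa using congrArg im h0)
  have hab : z + 1 - x₀ - η ≠ z - x₀ := fun h0 => hη (by
    have := congrArg re h0
    simp only [sub_re, add_re, one_re, ofReal_re] at this
    linarith)
  have hb_eq := eq_div_cexp_sub_one_of_log_sub_log_eq ha hb hab h
  rw [fixedPointMap, show ((1 - η : ℝ) : ℂ) = z + 1 - x₀ - η - (z - x₀) by push_cast; ring,
    ← hb_eq]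
  ring

lemma not_eqOn_fixedPointMap_id [IsProbabilityMeasure ν] (hη : η ≠ 0) :
    ¬ EqOn (fixedPointMap ν x₀ η) id upperHalfPlaneSet := by
  intro hid
  set w : ℝ → ℂ := fun T => -resolventTransform ν (x₀ + T * I)
  have haw : Tendsto (fun T : ℝ => (T * I) * w T) atTop (𝓝 1) := by
    simpa [w] using (tendsto_mul_I_mul_resolventTransform (ν := ν) x₀).neg
  have hw : Tendsto w atTop (𝓝 0) := by
    have h := tendsto_inv_ofReal_mul_I_atTop.mul haw
    rw [zero_mul] at h
    refine h.congr' ?_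
    filter_upwards [eventually_ne_atTop 0] with T hT
    rw [← mul_assoc, inv_mul_cancel₀ (mul_ne_zero (ofReal_ne_zero.2 hT) I_ne_zero), one_mul]
  have hfix : ∀ᶠ T : ℝ in atTop, (T * I) * (exp (w T) - 1) = ((1 - η : ℝ) : ℂ) := by
    filter_upwards [eventually_gt_atTop 0] with T hT
    have hq : ((1 - η : ℝ) : ℂ) / (exp (w T) - 1) = T * I := by
      simpa [fixedPointMap, w] using hid (show 0 < ((x₀ : ℂ) + T * I).im by simpa using hT)
    have hne : exp (w T) - 1 ≠ 0 := fun h0 => by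
      simp [h0, hT.ne'] at hq
    rw [← hq, div_mul_cancel₀ _ hne]
  have hlim := tendsto_nhds_unique tendsto_const_nhds
    ((tendsto_mul_cexp_sub_one haw hw).congr' hfix)
  have : (1 - η : ℝ) = 1 := by exact_mod_cast hlim
  exact hη (by linarith)

end FixedPointMap

lemma encard_le_two_of_conj_mem {S : Set ℂ} (him : ∀ z ∈ S, z.im ≠ 0)
    (hconj : ∀ z ∈ S, conj z ∈ S) (hupper : {z ∈ S | 0 < z.im}.Subsingleton) :
    S.encard ≤ 2 := by
  set U := {z ∈ S | 0 < z.im}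
  have hU : U.encard ≤ 1 := encard_le_one_iff_subsingleton.2 hupper
  have hsub : S ⊆ U ∪ conj '' U := by
    intro z hz
    rcases (him z hz).lt_or_gt with h | h
    · exact Or.inr ⟨conj z, ⟨hconj z hz, by simpa using h⟩, conj_conj z⟩
    · exact Or.inl ⟨hz, h⟩
  calc S.encard ≤ (U ∪ conj '' U).encard := encard_le_encard hsub
    _ ≤ U.encard + (conj '' U).encard := encard_union_le _ _
    _ ≤ 1 + 1 := add_le_add hU ((encard_image_le _ _).trans hU)
    _ = 2 := by norm_num

/-- Lemma 2.4: for a probability measure `ν` on `ℝ` with density bounded by `1`,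
`x₀ ∈ ℝ` and `0 < η < 1`, the equation
`Log(z + 1 - x₀ - η) - Log(z - x₀) - ∫ 1/(z - y) dν(y) = 0`
has either 0 or 2 non-real roots: the set of non-real roots is invariant under complex
conjugation and has at most two elements. -/
theorem stmt_4 (ν : Measure ℝ) [IsProbabilityMeasure ν]
    (hac : ν ≪ MeasureTheory.volume)
    (hden : ∀ᵐ x ∂(MeasureTheory.volume),
      ν.rnDeriv MeasureTheory.volume x ≤ 1)
    (x₀ : ℝ) (η : ℝ) (hη0 : 0 < η) (hη1 : η < 1)
    (G' : ℂ → ℂ)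
    (hG' : ∀ z : ℂ, G' z =
      Complex.log (z + 1 - (x₀ : ℂ) - (η : ℂ)) - Complex.log (z - (x₀ : ℂ)) -
        ∫ y : ℝ, 1 / (z - (y : ℂ)) ∂ν)
    (S : Set ℂ) (hS : S = {z : ℂ | z.im ≠ 0 ∧ G' z = 0}) :
    (∀ z ∈ S, (starRingEnd ℂ) z ∈ S) ∧ S.encard ≤ 2 := by
  have hle : ν ≤ volume := Measure.le_of_rnDeriv_le_one hac hden
  have hG'_conj (z : ℂ) (hz : z.im ≠ 0) : G' (conj z) = conj (G' z) := by
    have h₁ : (z + 1 - x₀ - η).im ≠ 0 := by simpa using hz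
    have h₂ : (z - x₀).im ≠ 0 := by simpa using hz
    rw [hG', hG', integral_one_div_sub_ofReal, integral_one_div_sub_ofReal,
      resolventTransform_conj, map_sub, map_sub, ← log_conj_of_im_ne_zero h₁,
      ← log_conj_of_im_ne_zero h₂]
    simp
  have hroot : ∀ z ∈ S, fixedPointMap ν x₀ η z = z := by
    rw [hS]
    rintro z ⟨hz, hG'z⟩
    refine fixedPointMap_eq_self_of_log_sub_log_eq hη1.ne hz ?_
    rwa [hG', integral_one_div_sub_ofReal, sub_eq_zero] at hG'z
  have hconj : ∀ z ∈ S, conj z ∈ S := by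
    rw [hS]
    rintro z ⟨hz, hG'z⟩
    exact ⟨by simpa using hz, by rw [hG'_conj z hz, hG'z, map_zero]⟩
  refine ⟨hconj, encard_le_two_of_conj_mem (by rw [hS]; exact fun z hz => hz.1) hconj ?_⟩
  rintro z₁ ⟨hz₁, h₁⟩ z₂ ⟨hz₂, h₂⟩
  by_contra hne
  exact not_eqOn_fixedPointMap_id hη0.ne' (eqOn_id_of_mapsTo_upperHalfPlaneSet_of_fixed
    (differentiableOn_fixedPointMap hle) (mapsTo_fixedPointMap hle hη1) h₁ h₂ hne
    (hroot z₁ hz₁) (hroot z₂ hz₂))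
end

section
/- For integers N ≥ 1 and real x, set R_N(x) = Σ_{k=−N}^{N} 1/√(x² + (k + 1/2)²). Then lim_{ε→0+} limsup_{N→∞} (1/N) ∫_0^{Nε} R_N(x) dx = 0; explicitly, for every δ > 0 there exists ε_0 > 0 such that for every ε with 0 < ε < ε_0 one has limsup_{N→∞} (1/N) ∫_0^{Nε} R_N(x) dx ≤ δ. -/
open Finset Filter MeasureTheory

/-- `∑_{j<n} 1/√(j+1) ≤ 2√n`. -/
lemma aux_sum_one_div_sqrt_le (n : ℕ) :
    ∑ j ∈ Finset.range n, 1 / Real.sqrt ((j : ℝ) + 1) ≤ 2 * Real.sqrt n := by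
  induction n with
  | zero => simp
  | succ n ih =>
    rw [Finset.sum_range_succ]
    have h1 : (0:ℝ) < Real.sqrt ((n:ℝ) + 1) := Real.sqrt_pos.2 (by positivity)
    have hprod : (Real.sqrt ((n:ℝ)+1) - Real.sqrt (n:ℝ)) *
        (Real.sqrt ((n:ℝ)+1) + Real.sqrt (n:ℝ)) = 1 := by
      have e1 : Real.sqrt ((n:ℝ)+1) ^ 2 = (n:ℝ) + 1 := Real.sq_sqrt (by positivity)
      have e2 : Real.sqrt (n:ℝ) ^ 2 = (n:ℝ) := Real.sq_sqrt (by positivity)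
      nlinarith
    have key : 1 / Real.sqrt ((n:ℝ)+1) ≤
        2 * (Real.sqrt ((n:ℝ)+1) - Real.sqrt (n:ℝ)) := by
      rw [div_le_iff₀ h1]
      nlinarith [Real.sqrt_nonneg (n:ℝ),
        Real.sqrt_le_sqrt (show (n:ℝ) ≤ (n:ℝ)+1 by linarith)]
    push_cast
    linarith

/-- `∑_{k=-N}^{N} 1/√(|k|+1) ≤ 4√(N+1)`. -/
lemma aux_abs_sum_le (N : ℕ) :
    ∑ k ∈ Finset.Icc (-(N:ℤ)) (N:ℤ), 1 / Real.sqrt ((k.natAbs : ℝ) + 1) ≤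
      4 * Real.sqrt ((N:ℝ) + 1) := by
  have hsplit : Finset.Icc (-(N:ℤ)) (N:ℤ) =
      Finset.Icc (-(N:ℤ)) (-1) ∪ Finset.Icc 0 (N:ℤ) := by
    ext k; simp only [Finset.mem_Icc, Finset.mem_union]; omega
  have hdisj : Disjoint (Finset.Icc (-(N:ℤ)) (-1)) (Finset.Icc 0 (N:ℤ)) := by
    simp only [Finset.disjoint_left, Finset.mem_Icc]; intro a h1 h2; omega
  rw [hsplit, Finset.sum_union hdisj]
  have hneg : ∑ k ∈ Finset.Icc (-(N:ℤ)) (-1), 1 / Real.sqrt ((k.natAbs : ℝ) + 1)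
      = ∑ j ∈ Finset.range N, 1 / Real.sqrt ((j : ℝ) + 2) := by
    refine Finset.sum_nbij' (fun k => (-k - 1).toNat) (fun j => -(j:ℤ) - 1)
      ?_ ?_ ?_ ?_ ?_
    · intro a ha; simp only [Finset.mem_Icc] at ha; simp only [Finset.mem_range]; omega
    · intro a ha; simp only [Finset.mem_range] at ha; simp only [Finset.mem_Icc]; omega
    · intro a ha; simp only [Finset.mem_Icc] at ha; omega
    · intro a ha; simp only [Finset.mem_range] at ha; omega
    · intro a ha
      simp only [Finset.mem_Icc] at ha
      have h : (a.natAbs : ℝ) + 1 = ((-a - 1).toNat : ℝ) + 2 := by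
        have h2 : a.natAbs = (-a - 1).toNat + 1 := by omega
        rw [h2]; push_cast; ring
      rw [h]
  have hpos : ∑ k ∈ Finset.Icc 0 (N:ℤ), 1 / Real.sqrt ((k.natAbs : ℝ) + 1)
      = ∑ j ∈ Finset.range (N+1), 1 / Real.sqrt ((j : ℝ) + 1) := by
    refine Finset.sum_nbij' (fun k => k.toNat) (fun j => (j:ℤ)) ?_ ?_ ?_ ?_ ?_
    · intro a ha; simp only [Finset.mem_Icc] at ha; simp only [Finset.mem_range]; omega
    · intro a ha; simp only [Finset.mem_range] at ha; simp only [Finset.mem_Icc]; omega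
    · intro a ha; simp only [Finset.mem_Icc] at ha; omega
    · intro a _; simp
    · intro a ha
      simp only [Finset.mem_Icc] at ha
      have h : (a.natAbs : ℝ) = (a.toNat : ℝ) := by
        have h2 : a.natAbs = a.toNat := by omega
        rw [h2]
      rw [h]
  have b1 : ∑ j ∈ Finset.range N, 1 / Real.sqrt ((j : ℝ) + 2) ≤
      2 * Real.sqrt ((N:ℝ) + 1) := by
    calc ∑ j ∈ Finset.range N, 1 / Real.sqrt ((j : ℝ) + 2)
        ≤ ∑ j ∈ Finset.range N, 1 / Real.sqrt ((j : ℝ) + 1) := by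
          refine Finset.sum_le_sum fun j _ => ?_
          have h1 : (0:ℝ) < Real.sqrt ((j:ℝ) + 1) := Real.sqrt_pos.2 (by positivity)
          exact one_div_le_one_div_of_le h1 (Real.sqrt_le_sqrt (by linarith))
      _ ≤ 2 * Real.sqrt (N:ℝ) := aux_sum_one_div_sqrt_le N
      _ ≤ 2 * Real.sqrt ((N:ℝ) + 1) := by
          have := Real.sqrt_le_sqrt (show (N:ℝ) ≤ (N:ℝ)+1 by linarith)
          linarith
  have b2 : ∑ j ∈ Finset.range (N+1), 1 / Real.sqrt ((j : ℝ) + 1) ≤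
      2 * Real.sqrt ((N:ℝ) + 1) := by
    have := aux_sum_one_div_sqrt_le (N+1)
    push_cast at this
    exact this
  rw [hneg, hpos]
  linarith

/-- Pointwise bound: for `x > 0`,
`1/√(x² + (k+1/2)²) ≤ (√2 / √(|k|+1)) * x ^ (-(1/2))`. -/
lemma aux_pointwise (k : ℤ) (x : ℝ) (hx : 0 < x) :
    1 / Real.sqrt (x ^ 2 + ((k : ℝ) + 1 / 2) ^ 2) ≤
      (Real.sqrt 2 / Real.sqrt ((k.natAbs : ℝ) + 1)) * x ^ (-(1/2) : ℝ) := by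
  set m : ℝ := (k.natAbs : ℝ) with hm
  have hm0 : 0 ≤ m := by positivity
  have habs : m + 1 ≤ 4 * |(k : ℝ) + 1 / 2| := by
    rcases le_or_gt 0 k with hk | hk
    · have h1 : (0:ℝ) ≤ (k:ℝ) := by exact_mod_cast hk
      have h2 : m = (k:ℝ) := by
        rw [hm, Nat.cast_natAbs]; exact_mod_cast abs_of_nonneg hk
      rw [abs_of_nonneg (by linarith)]; linarith
    · have hk1 : k ≤ -1 := by omega
      have h1 : ((k:ℝ)) ≤ -1 := by exact_mod_cast hk1
      have h2 : m = -(k:ℝ) := by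
        rw [hm, Nat.cast_natAbs]; exact_mod_cast abs_of_nonpos hk.le
      rw [abs_of_nonpos (by linarith)]; linarith
  -- lower bound on the denominator
  have hlow : Real.sqrt (m + 1) * Real.sqrt x / Real.sqrt 2 ≤
      Real.sqrt (x ^ 2 + ((k : ℝ) + 1 / 2) ^ 2) := by
    apply Real.le_sqrt_of_sq_le
    have e1 : (Real.sqrt (m + 1) * Real.sqrt x / Real.sqrt 2) ^ 2
        = (m + 1) * x / 2 := by
      rw [div_pow, mul_pow, Real.sq_sqrt (by positivity), Real.sq_sqrt hx.le,
        Real.sq_sqrt (by norm_num : (0:ℝ) ≤ 2)]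
    rw [e1]
    nlinarith [sq_abs ((k:ℝ) + 1/2), sq_nonneg (x - |(k:ℝ) + 1/2|),
      abs_nonneg ((k:ℝ) + 1/2), hx.le, mul_le_mul_of_nonneg_left habs hx.le]
  have hpos : (0:ℝ) < Real.sqrt (m + 1) * Real.sqrt x / Real.sqrt 2 := by
    have h1 : (0:ℝ) < Real.sqrt (m + 1) := Real.sqrt_pos.2 (by positivity)
    have h2 : (0:ℝ) < Real.sqrt x := Real.sqrt_pos.2 hx
    have h3 : (0:ℝ) < Real.sqrt 2 := Real.sqrt_pos.2 (by norm_num)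
    positivity
  have hx' : x ^ (-(1/2) : ℝ) = (Real.sqrt x)⁻¹ := by
    rw [Real.rpow_neg hx.le, Real.sqrt_eq_rpow]
  calc 1 / Real.sqrt (x ^ 2 + ((k : ℝ) + 1 / 2) ^ 2)
      ≤ 1 / (Real.sqrt (m + 1) * Real.sqrt x / Real.sqrt 2) :=
        one_div_le_one_div_of_le hpos hlow
    _ = (Real.sqrt 2 / Real.sqrt (m + 1)) * x ^ (-(1/2) : ℝ) := by
        rw [hx']
        have h1 : Real.sqrt (m + 1) ≠ 0 := ne_of_gt (Real.sqrt_pos.2 (by positivity))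
        have h2 : Real.sqrt x ≠ 0 := ne_of_gt (Real.sqrt_pos.2 hx)
        have h3 : Real.sqrt 2 ≠ 0 := ne_of_gt (Real.sqrt_pos.2 (by norm_num))
        field_simp

/-- Lemma 2.6: with `R_N(x) = ∑_{k=-N}^{N} 1/√(x² + (k + 1/2)²)`, one has
`lim_{ε→0+} limsup_{N→∞} (1/N) ∫_0^{Nε} R_N(x) dx = 0`: for every `δ > 0` there is
`ε₀ > 0` such that for all `0 < ε < ε₀` the limsup is at most `δ`. -/
theorem stmt_5 (RN : ℕ → ℝ → ℝ)
    (hRN : ∀ (N : ℕ) (x : ℝ), RN N x =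
      ∑ k ∈ Finset.Icc (-(N : ℤ)) (N : ℤ),
        1 / Real.sqrt (x ^ 2 + ((k : ℝ) + 1 / 2) ^ 2)) :
    ∀ δ : ℝ, 0 < δ → ∃ ε₀ : ℝ, 0 < ε₀ ∧ ∀ ε : ℝ, 0 < ε → ε < ε₀ →
      Filter.limsup
        (fun N : ℕ => (1 / (N : ℝ)) * ∫ x in (0 : ℝ)..((N : ℝ) * ε), RN N x)
        Filter.atTop ≤ δ := by
  intro δ hδ
  refine ⟨(δ/16)^2, by positivity, ?_⟩
  intro ε hε hε0
  set u : ℕ → ℝ := fun N => (1/(N:ℝ)) * ∫ x in (0:ℝ)..((N:ℝ)*ε), RN N x with hu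
  have hcont : ∀ N : ℕ, Continuous (RN N) := by
    intro N
    have hfun : RN N = fun x => ∑ k ∈ Finset.Icc (-(N:ℤ)) (N:ℤ),
        1 / Real.sqrt (x ^ 2 + ((k:ℝ) + 1/2) ^ 2) := funext (hRN N)
    rw [hfun]
    refine continuous_finset_sum _ fun k _ => ?_
    have hk : ((k:ℝ) + 1/2) ≠ 0 := by
      intro h
      have h1 : ((2*k+1 : ℤ) : ℝ) = 0 := by push_cast; linarith
      have h2 : (2*k+1 : ℤ) = 0 := by exact_mod_cast h1
      omega
    have hk2 : (0:ℝ) < ((k:ℝ) + 1/2) ^ 2 := by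
      rcases lt_or_gt_of_ne hk with h | h
      · nlinarith
      · nlinarith
    refine continuous_const.div (Real.continuous_sqrt.comp (by continuity)) fun x => ?_
    exact ne_of_gt (Real.sqrt_pos.2 (by nlinarith [sq_nonneg x]))
  have hu0 : ∀ N, 0 ≤ u N := by
    intro N
    apply mul_nonneg (by positivity)
    apply intervalIntegral.integral_nonneg (by positivity)
    intro x _
    rw [hRN]
    exact Finset.sum_nonneg fun k _ => by positivity
  have key : ∀ N : ℕ, 1 ≤ N → u N ≤ 16 * Real.sqrt ε := by
    intro N hN
    have hN0 : (0:ℝ) < N := by exact_mod_cast Nat.lt_of_lt_of_le Nat.zero_lt_one hN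
    set T := (N:ℝ) * ε with hT
    have hT0 : 0 < T := by positivity
    set S := ∑ k ∈ Finset.Icc (-(N:ℤ)) (N:ℤ),
        Real.sqrt 2 / Real.sqrt ((k.natAbs:ℝ)+1) with hS
    have hS0 : 0 ≤ S := Finset.sum_nonneg fun k _ => by positivity
    have hfi : IntervalIntegrable (RN N) volume 0 T :=
      (hcont N).intervalIntegrable 0 T
    have hgi : IntervalIntegrable (fun x => S * x ^ (-(1/2):ℝ)) volume 0 T :=
      (intervalIntegral.intervalIntegrable_rpow' (by norm_num)).const_mul S
    have hmono : (∫ x in (0:ℝ)..T, RN N x) ≤ ∫ x in (0:ℝ)..T, S * x ^ (-(1/2):ℝ) := by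
      apply intervalIntegral.integral_mono_ae_restrict hT0.le hfi hgi
      have h0 : ∀ᵐ (x:ℝ) ∂(volume.restrict (Set.Icc (0:ℝ) T)), x ≠ 0 := by
        refine ae_restrict_of_ae ?_
        rw [ae_iff]
        have : {x : ℝ | ¬ x ≠ 0} = {0} := by ext x; simp
        rw [this]
        exact measure_singleton 0
      filter_upwards [ae_restrict_mem measurableSet_Icc, h0] with x hxmem hx0
      have hxpos : 0 < x := lt_of_le_of_ne hxmem.1 (Ne.symm hx0)
      rw [hRN, hS, Finset.sum_mul]
      exact Finset.sum_le_sum fun k _ => aux_pointwise k x hxpos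
    have hval : ∫ x in (0:ℝ)..T, S * x ^ (-(1/2):ℝ) = S * (2 * Real.sqrt T) := by
      rw [intervalIntegral.integral_const_mul,
        integral_rpow (Or.inl (by norm_num : (-1:ℝ) < -(1/2)))]
      have h0 : ((0:ℝ)) ^ (-(1/2) + 1 : ℝ) = 0 := Real.zero_rpow (by norm_num)
      have h1 : (-(1/2 : ℝ)) + 1 = 1/2 := by norm_num
      rw [h0, h1, Real.sqrt_eq_rpow]
      ring
    have hS8 : S ≤ 8 * Real.sqrt N := by
      have h1 : S = Real.sqrt 2 * ∑ k ∈ Finset.Icc (-(N:ℤ)) (N:ℤ),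
          1 / Real.sqrt ((k.natAbs:ℝ)+1) := by
        rw [hS, Finset.mul_sum]
        exact Finset.sum_congr rfl fun k _ => by rw [mul_one_div]
      have hN1 : (1:ℝ) ≤ (N:ℝ) := by exact_mod_cast hN
      have h2 : Real.sqrt ((N:ℝ)+1) ≤ Real.sqrt 2 * Real.sqrt N := by
        rw [← Real.sqrt_mul (by norm_num : (0:ℝ) ≤ 2)]
        apply Real.sqrt_le_sqrt
        linarith
      have h3 := aux_abs_sum_le N
      have h4 : Real.sqrt 2 * Real.sqrt 2 = 2 := Real.mul_self_sqrt (by norm_num)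
      have h5 : (0:ℝ) ≤ Real.sqrt 2 := Real.sqrt_nonneg 2
      calc S = Real.sqrt 2 * ∑ k ∈ Finset.Icc (-(N:ℤ)) (N:ℤ),
            1 / Real.sqrt ((k.natAbs:ℝ)+1) := h1
        _ ≤ Real.sqrt 2 * (4 * Real.sqrt ((N:ℝ)+1)) :=
            mul_le_mul_of_nonneg_left h3 h5
        _ ≤ Real.sqrt 2 * (4 * (Real.sqrt 2 * Real.sqrt N)) := by nlinarith
        _ = 8 * Real.sqrt N := by nlinarith [Real.sqrt_nonneg (N:ℝ)]
    have step : u N ≤ (1/(N:ℝ)) * (S * (2 * Real.sqrt T)) := by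
      rw [hu]
      exact mul_le_mul_of_nonneg_left (hval ▸ hmono) (by positivity)
    refine step.trans ?_
    have hsT : Real.sqrt T = Real.sqrt N * Real.sqrt ε := by
      rw [hT, Real.sqrt_mul hN0.le]
    rw [hsT, one_div, inv_mul_le_iff₀ hN0]
    have hNs : Real.sqrt ↑N * Real.sqrt ↑N = (N:ℝ) := Real.mul_self_sqrt hN0.le
    have hineq := mul_le_mul_of_nonneg_right hS8
      (show (0:ℝ) ≤ 2 * (Real.sqrt N * Real.sqrt ε) by positivity)
    have heq : (8:ℝ) * Real.sqrt N * (2 * (Real.sqrt N * Real.sqrt ε))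
        = 16 * ((N:ℝ) * Real.sqrt ε) := by linear_combination 16 * Real.sqrt ε * hNs
    linarith [hineq, heq]
  have hev : ∀ᶠ N in atTop, u N ≤ 16 * Real.sqrt ε := eventually_atTop.2 ⟨1, key⟩
  have hcb : IsCoboundedUnder (· ≤ ·) atTop u :=
    Filter.isCoboundedUnder_le_of_le atTop hu0
  calc limsup u atTop ≤ 16 * Real.sqrt ε := Filter.limsup_le_of_le hcb hev
    _ ≤ δ := by
      have h1 : Real.sqrt ε ≤ δ/16 := by
        have h2 := Real.sqrt_le_sqrt hε0.le
        rwa [Real.sqrt_sq (by positivity)] at h2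
      linarith
end

section
/- There exists a constant C > 0 such that for every integer N ≥ 2 and every real ε with 0 < ε < 1, Σ_{k ∈ ℤ, −N ≤ k ≤ N, |k+1/2| ≤ √ε·N} arsinh( εN / |k + 1/2| ) ≤ C·( ln N + √ε·N + √ε·ln(1/ε)·N + 1 ), where arsinh(y) = ln( y + √(y² + 1) ) is the inverse hyperbolic sine. -/
/-!
Since `arsinh y ≤ log (1 + 2y)` and `ε ≤ √ε`, with `A = √ε N` every term is at most
`log (1 + 2A / |k + 1/2|)`. The indices `k` and `-1 - k` give the same half-integer
`|k + 1/2| = i + 1/2`, and `1 + 2A / (i + 1/2) ≤ x / (i + 1)` for `i < M = ⌈A⌉₊`,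
`x = M + 4A`, so the sum is at most `2 log (x ^ M / M!) ≤ 2x = O(A + 1)` by `x ^ M / M! ≤ eˣ`.
-/

open Finset

theorem Real.arsinh_le_log_one_add_two_mul {y : ℝ} (hy : 0 ≤ y) :
    Real.arsinh y ≤ Real.log (1 + 2 * y) := by
  refine Real.log_le_log (by positivity) ?_
  have : √(1 + y ^ 2) ≤ 1 + y := Real.sqrt_le_iff.mpr ⟨by positivity, by nlinarith⟩
  linarith

theorem Finset.sum_Ico_neg_natCast {M : Type*} [AddCommMonoid M] (f : ℤ → M) (n : ℕ) :
    ∑ k ∈ Ico (-(n : ℤ)) n, f k = ∑ i ∈ range n, (f i + f (-i - 1)) := by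
  rw [Int.Ico_eq_finset_map, sum_map, show (n - -n : ℤ).toNat = n + n by omega, sum_range_add,
    ← sum_range_reflect, ← sum_add_distrib]
  refine sum_congr rfl fun i hi => ?_
  simp only [mem_range] at hi
  simp only [Function.Embedding.trans_apply, Nat.castEmbedding_apply, addLeftEmbedding_apply]
  rw [add_comm]
  congr 2 <;> omega

theorem Real.sum_range_log_div_le {x : ℝ} (hx : 0 < x) (n : ℕ) :
    ∑ i ∈ range n, Real.log (x / (i + 1)) ≤ x := by
  rw [← Real.log_prod fun i _ => by positivity, prod_div_distrib, prod_const, card_range]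
  calc Real.log (x ^ n / ∏ i ∈ range n, ((i : ℝ) + 1))
      = Real.log (x ^ n / n.factorial) := by
        rw [← prod_range_add_one_eq_factorial]; push_cast; rfl
    _ ≤ Real.log (Real.exp x) :=
        Real.log_le_log (by positivity) (Real.pow_div_factorial_le_exp x hx.le n)
    _ = x := Real.log_exp x

theorem sum_log_one_add_div_abs_add_half_le {A : ℝ} (hA : 0 < A) {S : Finset ℤ}
    (hS : ∀ k ∈ S, |(k : ℝ) + 1 / 2| ≤ A) :
    ∑ k ∈ S, Real.log (1 + 2 * A / |(k : ℝ) + 1 / 2|) ≤ 10 * A + 2 := by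
  set M := ⌈A⌉₊
  have hM : (M : ℝ) < A + 1 := Nat.ceil_lt_add_one hA.le
  have hsub : S ⊆ Ico (-(M : ℤ)) M := fun k hk => by
    obtain ⟨hk₁, hk₂⟩ := abs_le.mp (hS k hk)
    have hAM : A ≤ M := Nat.le_ceil A
    have h₁ : ((-(M : ℤ) : ℤ) : ℝ) < (k + 1 : ℤ) := by push_cast; linarith
    have h₂ : (k : ℝ) < (M : ℤ) := by push_cast; linarith
    exact mem_Ico.mpr ⟨Int.lt_add_one_iff.mp (Int.cast_lt.mp h₁), Int.cast_lt.mp h₂⟩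
  have habs (i : ℕ) :
      |((i : ℤ) : ℝ) + 1 / 2| = i + 1 / 2 ∧ |((-i - 1 : ℤ) : ℝ) + 1 / 2| = i + 1 / 2 := by
    push_cast
    constructor
    · exact abs_of_nonneg (by positivity)
    · rw [abs_of_nonpos (by linarith [(i.cast_nonneg : (0 : ℝ) ≤ i)])]; ring
  have hstep (i : ℕ) (hi : i < M) :
      1 + 2 * A / (i + 1 / 2) ≤ (M + 4 * A) / (i + 1) := by
    have hi' : (i : ℝ) + 1 ≤ M := by exact_mod_cast hi
    have h₁ : 2 * A / (i + 1 / 2) ≤ 4 * A / (i + 1) := by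
      rw [div_le_div_iff₀ (by positivity) (by positivity)]; nlinarith
    have h₂ : 1 ≤ M / ((i : ℝ) + 1) := (one_le_div (by positivity)).mpr hi'
    rw [add_div]; linarith
  calc ∑ k ∈ S, Real.log (1 + 2 * A / |(k : ℝ) + 1 / 2|)
      ≤ ∑ k ∈ Ico (-(M : ℤ)) M, Real.log (1 + 2 * A / |(k : ℝ) + 1 / 2|) :=
        sum_le_sum_of_subset_of_nonneg hsub fun k _ _ =>
          Real.log_nonneg (le_add_of_nonneg_right (by positivity))
    _ = 2 * ∑ i ∈ range M, Real.log (1 + 2 * A / (i + 1 / 2)) := by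
        rw [sum_Ico_neg_natCast, mul_sum]
        refine sum_congr rfl fun i _ => ?_
        rw [(habs i).1, (habs i).2]; ring
    _ ≤ 2 * ∑ i ∈ range M, Real.log ((M + 4 * A) / (i + 1)) := by
        gcongr with i hi
        exact hstep i (mem_range.mp hi)
    _ ≤ 2 * (M + 4 * A) := by gcongr; exact Real.sum_range_log_div_le (by positivity) M
    _ ≤ 10 * A + 2 := by linarith

/-- Eqs. (2.16)–(2.17) in the proof of Lemma 2.6: there is a constant `C > 0` such that
for all `N ≥ 2` and `0 < ε < 1`,
`∑_{|k+1/2| ≤ √ε N, -N ≤ k ≤ N} arsinh(εN/|k+1/2|)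
  ≤ C (ln N + √ε N + √ε ln(1/ε) N + 1)`. -/
theorem stmt_8 :
    ∃ C : ℝ, 0 < C ∧ ∀ N : ℕ, 2 ≤ N → ∀ ε : ℝ, 0 < ε → ε < 1 →
      ∑ k ∈ (Finset.Icc (-(N : ℤ)) (N : ℤ)).filter
          (fun k : ℤ => |(k : ℝ) + 1 / 2| ≤ Real.sqrt ε * (N : ℝ)),
        Real.arsinh (ε * (N : ℝ) / |(k : ℝ) + 1 / 2|) ≤
      C * (Real.log N + Real.sqrt ε * (N : ℝ) +
        Real.sqrt ε * Real.log (1 / ε) * (N : ℝ) + 1) := by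
  refine ⟨10, by norm_num, fun N hN ε hε hε₁ => ?_⟩
  have hN₀ : (0 : ℝ) < N := by positivity
  have hA : 0 < √ε * N := by positivity
  have hε_le_sqrt : ε ≤ √ε := Real.le_sqrt_of_sq_le (by nlinarith)
  have hterm (k : ℤ) : Real.arsinh (ε * N / |(k : ℝ) + 1 / 2|) ≤
      Real.log (1 + 2 * (√ε * N) / |(k : ℝ) + 1 / 2|) := by
    refine (Real.arsinh_le_log_one_add_two_mul (by positivity)).trans
      (Real.log_le_log (by positivity) ?_)
    rw [← mul_div_assoc]
    gcongr
  have hlogN : 0 ≤ Real.log N := Real.log_nonneg (by exact_mod_cast (by omega : 1 ≤ N))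
  have hlogε : 0 ≤ √ε * Real.log (1 / ε) * N :=
    mul_nonneg (mul_nonneg (Real.sqrt_nonneg ε)
      (Real.log_nonneg (one_le_one_div hε hε₁.le))) hN₀.le
  calc _ ≤ ∑ k ∈ (Icc (-(N : ℤ)) N).filter (fun k : ℤ => |(k : ℝ) + 1 / 2| ≤ √ε * N),
          Real.log (1 + 2 * (√ε * N) / |(k : ℝ) + 1 / 2|) := sum_le_sum fun k _ => hterm k
    _ ≤ 10 * (√ε * N) + 2 :=
        sum_log_one_add_div_abs_add_half_le hA fun k hk => (mem_filter.mp hk).2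
    _ ≤ _ := by linarith
end

section
/- Let U ⊂ ℂ × ℂ be open, let (z₀, η₀) ∈ U, and let ξ : U → ℂ and E : ℂ → ℂ be functions such that: (i) ξ(z, η) ≠ 1 for all (z, η) ∈ U and the identity ξ(z, η)·E( η + z + (1 − η)/(1 − ξ(z, η)) ) = 1 holds for all (z, η) ∈ U; (ii) the partial derivatives ∂_z ξ and ∂_η ξ exist at (z₀, η₀), i.e., the maps z ↦ ξ(z, η₀) and η ↦ ξ(z₀, η) are complex-differentiable at z₀ and η₀ respectively; (iii) E is complex-differentiable at w₀ = η₀ + z₀ + (1 − η₀)/(1 − ξ(z₀, η₀)). Then ξ(z₀, η₀) ≠ 0 and, at the point (z₀, η₀), ((ξ − 1)/ξ)·∂_η ξ = ∂_z ξ. -/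
/-- The complex inviscid Burgers equation derived in the proof of Theorem 4.2: if
`ξ : U → ℂ` (with `U ⊆ ℂ × ℂ` open, `(z₀, η₀) ∈ U`) never takes the value `1` on `U`
and satisfies `ξ(z,η) · E(η + z + (1-η)/(1-ξ(z,η))) = 1` on `U`, the partial derivatives
`∂_z ξ`, `∂_η ξ` exist at `(z₀, η₀)`, and `E` is differentiable at
`w₀ = η₀ + z₀ + (1-η₀)/(1-ξ(z₀,η₀))`, then `ξ(z₀,η₀) ≠ 0` and
`((ξ-1)/ξ) ∂_η ξ = ∂_z ξ` at `(z₀, η₀)`. -/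
theorem stmt_14 (U : Set (ℂ × ℂ)) (hU : IsOpen U)
    (z₀ η₀ : ℂ) (hmem : (z₀, η₀) ∈ U)
    (ξ : ℂ × ℂ → ℂ) (E : ℂ → ℂ)
    (hne1 : ∀ p ∈ U, ξ p ≠ 1)
    (hrel : ∀ p ∈ U, ξ p * E (p.2 + p.1 + (1 - p.2) / (1 - ξ p)) = 1)
    (hdz : DifferentiableAt ℂ (fun z : ℂ => ξ (z, η₀)) z₀)
    (hdη : DifferentiableAt ℂ (fun η : ℂ => ξ (z₀, η)) η₀)
    (hdE : DifferentiableAt ℂ E (η₀ + z₀ + (1 - η₀) / (1 - ξ (z₀, η₀)))) :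
    ξ (z₀, η₀) ≠ 0 ∧
      ((ξ (z₀, η₀) - 1) / ξ (z₀, η₀)) * deriv (fun η : ℂ => ξ (z₀, η)) η₀ =
        deriv (fun z : ℂ => ξ (z, η₀)) z₀ := by
  set ξ₀ := ξ (z₀, η₀) with hξ₀
  set w₀ := η₀ + z₀ + (1 - η₀) / (1 - ξ₀) with hw₀
  set E₀ := E w₀ with hE₀
  set e := deriv E w₀ with he
  set f' := deriv (fun z : ℂ => ξ (z, η₀)) z₀ with hf'
  set g' := deriv (fun η : ℂ => ξ (z₀, η)) η₀ with hg'
  have hξ1 : ξ₀ ≠ 1 := hne1 _ hmem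
  have h1ξ : (1 : ℂ) - ξ₀ ≠ 0 := fun h => hξ1 (by linear_combination -h)
  have hprod : ξ₀ * E₀ = 1 := by
    have := hrel _ hmem
    simpa [hw₀, hE₀] using this
  have hξ0 : ξ₀ ≠ 0 := by
    intro h; rw [h, zero_mul] at hprod; exact one_ne_zero hprod.symm
  refine ⟨hξ0, ?_⟩
  have hE : HasDerivAt E e w₀ := hdE.hasDerivAt
  -- z-direction
  have hf : HasDerivAt (fun z : ℂ => ξ (z, η₀)) f' z₀ := hdz.hasDerivAt
  have hdenz : HasDerivAt (fun z : ℂ => 1 - ξ (z, η₀)) (0 - f') z₀ :=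
    (hasDerivAt_const z₀ (1 : ℂ)).sub hf
  have hdivz : HasDerivAt (fun z : ℂ => (1 - η₀) / (1 - ξ (z, η₀)))
      ((0 * (1 - ξ₀) - (1 - η₀) * (0 - f')) / (1 - ξ₀) ^ 2) z₀ :=
    (hasDerivAt_const z₀ (1 - η₀)).div hdenz h1ξ
  have hinnz : HasDerivAt (fun z : ℂ => η₀ + z + (1 - η₀) / (1 - ξ (z, η₀)))
      ((0 + 1) + (0 * (1 - ξ₀) - (1 - η₀) * (0 - f')) / (1 - ξ₀) ^ 2) z₀ :=
    ((hasDerivAt_const z₀ η₀).add (hasDerivAt_id z₀)).add hdivz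
  have hEz : HasDerivAt (fun z : ℂ => E (η₀ + z + (1 - η₀) / (1 - ξ (z, η₀))))
      (e * ((0 + 1) + (0 * (1 - ξ₀) - (1 - η₀) * (0 - f')) / (1 - ξ₀) ^ 2)) z₀ :=
    hE.comp z₀ hinnz
  have hmulz : HasDerivAt
      (fun z : ℂ => ξ (z, η₀) * E (η₀ + z + (1 - η₀) / (1 - ξ (z, η₀))))
      (f' * E₀ + ξ₀ * (e * ((0 + 1) + (0 * (1 - ξ₀) - (1 - η₀) * (0 - f')) / (1 - ξ₀) ^ 2))) z₀ :=
    hf.mul hEz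
  have hevz : (fun z : ℂ => ξ (z, η₀) * E (η₀ + z + (1 - η₀) / (1 - ξ (z, η₀))))
      =ᶠ[nhds z₀] fun _ => (1 : ℂ) := by
    have hc : ContinuousAt (fun z : ℂ => ((z, η₀) : ℂ × ℂ)) z₀ := by fun_prop
    filter_upwards [hc.preimage_mem_nhds (hU.mem_nhds hmem)] with z hz
    simpa using hrel _ hz
  have h0z : HasDerivAt
      (fun z : ℂ => ξ (z, η₀) * E (η₀ + z + (1 - η₀) / (1 - ξ (z, η₀)))) 0 z₀ :=
    (hasDerivAt_const z₀ (1 : ℂ)).congr_of_eventuallyEq hevz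
  have eq1 := hmulz.unique h0z
  -- η-direction
  have hg : HasDerivAt (fun η : ℂ => ξ (z₀, η)) g' η₀ := hdη.hasDerivAt
  have hdenη : HasDerivAt (fun η : ℂ => 1 - ξ (z₀, η)) (0 - g') η₀ :=
    (hasDerivAt_const η₀ (1 : ℂ)).sub hg
  have hnumη : HasDerivAt (fun η : ℂ => 1 - η) (0 - 1) η₀ :=
    (hasDerivAt_const η₀ (1 : ℂ)).sub (hasDerivAt_id η₀)
  have hdivη : HasDerivAt (fun η : ℂ => (1 - η) / (1 - ξ (z₀, η)))
      (((0 - 1) * (1 - ξ₀) - (1 - η₀) * (0 - g')) / (1 - ξ₀) ^ 2) η₀ :=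
    hnumη.div hdenη h1ξ
  have hinnη : HasDerivAt (fun η : ℂ => η + z₀ + (1 - η) / (1 - ξ (z₀, η)))
      ((1 + 0) + ((0 - 1) * (1 - ξ₀) - (1 - η₀) * (0 - g')) / (1 - ξ₀) ^ 2) η₀ :=
    ((hasDerivAt_id η₀).add (hasDerivAt_const η₀ z₀)).add hdivη
  have hw₀' : η₀ + z₀ + (1 - η₀) / (1 - ξ₀) = w₀ := rfl
  have hEη : HasDerivAt (fun η : ℂ => E (η + z₀ + (1 - η) / (1 - ξ (z₀, η))))
      (e * ((1 + 0) + ((0 - 1) * (1 - ξ₀) - (1 - η₀) * (0 - g')) / (1 - ξ₀) ^ 2)) η₀ :=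
    hE.comp η₀ hinnη
  have hmulη : HasDerivAt
      (fun η : ℂ => ξ (z₀, η) * E (η + z₀ + (1 - η) / (1 - ξ (z₀, η))))
      (g' * E₀ + ξ₀ * (e * ((1 + 0) + ((0 - 1) * (1 - ξ₀) - (1 - η₀) * (0 - g')) / (1 - ξ₀) ^ 2))) η₀ :=
    hg.mul hEη
  have hevη : (fun η : ℂ => ξ (z₀, η) * E (η + z₀ + (1 - η) / (1 - ξ (z₀, η))))
      =ᶠ[nhds η₀] fun _ => (1 : ℂ) := by
    have hc : ContinuousAt (fun η : ℂ => ((z₀, η) : ℂ × ℂ)) η₀ := by fun_prop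
    filter_upwards [hc.preimage_mem_nhds (hU.mem_nhds hmem)] with η hη
    simpa using hrel _ hη
  have h0η : HasDerivAt
      (fun η : ℂ => ξ (z₀, η) * E (η + z₀ + (1 - η) / (1 - ξ (z₀, η)))) 0 η₀ :=
    (hasDerivAt_const η₀ (1 : ℂ)).congr_of_eventuallyEq hevη
  have eq2 := hmulη.unique h0η
  -- algebra
  have eq1' : f' * (E₀ * (1 - ξ₀) ^ 2 + ξ₀ * e * (1 - η₀)) + ξ₀ * e * (1 - ξ₀) ^ 2 = 0 := by
    field_simp at eq1
    linear_combination eq1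
  have eq2' : g' * (E₀ * (1 - ξ₀) ^ 2 + ξ₀ * e * (1 - η₀)) - ξ₀ * ξ₀ * e * (1 - ξ₀) = 0 := by
    field_simp at eq2
    linear_combination eq2
  set D := E₀ * (1 - ξ₀) ^ 2 + ξ₀ * e * (1 - η₀) with hD
  have hDne : D ≠ 0 := by
    intro h
    rw [h, mul_zero, zero_add] at eq1'
    have he0 : e = 0 := by
      rcases mul_eq_zero.mp eq1' with h' | h'
      · rcases mul_eq_zero.mp h' with h'' | h''
        · exact absurd h'' hξ0
        · exact h''
      · exact absurd h' (pow_ne_zero 2 h1ξ)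
    have hE₀0 : E₀ ≠ 0 := by
      intro h'; rw [h', mul_zero] at hprod; exact one_ne_zero hprod.symm
    rw [hD, he0] at h
    have h2 : E₀ * (1 - ξ₀) ^ 2 = 0 := by linear_combination h
    exact mul_ne_zero hE₀0 (pow_ne_zero 2 h1ξ) h2
  -- target: ((ξ₀ - 1)/ξ₀) * g' = f'
  rw [div_mul_eq_mul_div, div_eq_iff hξ0]
  have key : ((ξ₀ - 1) * g' - f' * ξ₀) * D = 0 := by
    linear_combination (ξ₀ - 1) * eq2' - ξ₀ * eq1'
  have := (mul_eq_zero.mp key).resolve_right hDne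
  linear_combination this
end
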